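/- arXiv:1806.11465 — 12 statements merged into one kernel-verified Lean document; each statement's English description precedes it below -/
import Mathlib

section
/- Let G be a non-trivial finite simple graph (at least 2 vertices). Then χ_NL(G) ≤ χ(G) + λ(G), where χ(G) is the chromatic number and λ(G) is the location-domination number of G. -/
open SimpleGraph

/-- A coloring `c : V → Fin k` is a *neighbor-locating coloring* of `G` if it is proper and
any two distinct vertices with the same color have different sets of colors on their
open neighborhoods. -/
def IsNLColoring {V : Type*} (G : SimpleGraph V) {k : ℕ} (c : V → Fin k) : Prop :=
  (∀ u v : V, G.Adj u v → c u ≠ c v) ∧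
  ∀ u v : V, u ≠ v → c u = c v → c '' (G.neighborSet u) ≠ c '' (G.neighborSet v)

/-- The neighbor-locating chromatic number: the least `k` admitting an NL-coloring. -/
noncomputable def nlChromaticNumber {V : Type*} (G : SimpleGraph V) : ℕ :=
  sInf {k : ℕ | ∃ c : V → Fin k, IsNLColoring G c}

/-- A set is locating-dominating if it is dominating and outside vertices are distinguished
by their neighborhoods inside the set. -/
def IsLocatingDominating {V : Type*} (G : SimpleGraph V) (S : Set V) : Prop :=
  (∀ v ∉ S, ∃ u ∈ S, G.Adj v u) ∧
  ∀ u ∉ S, ∀ v ∉ S, u ≠ v → G.neighborSet u ∩ S ≠ G.neighborSet v ∩ S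

/-- The location-domination number: minimum size of a locating-dominating set. -/
noncomputable def locationDominationNumber {V : Type*} (G : SimpleGraph V) : ℕ :=
  sInf {n : ℕ | ∃ S : Set V, IsLocatingDominating G S ∧ S.ncard = n}

/-- For a non-trivial finite graph `G`, `χ_NL(G) ≤ χ(G) + λ(G)`. -/
theorem nlChromaticNumber_le_chromaticNumber_add_locationDominationNumber
    {V : Type*} [Fintype V] (G : SimpleGraph V) (hn : 2 ≤ Fintype.card V) :
    (nlChromaticNumber G : ℕ∞) ≤ G.chromaticNumber + locationDominationNumber G := by
  classical
  have hne : G.chromaticNumber ≠ ⊤ := by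
    rw [SimpleGraph.chromaticNumber_ne_top_iff_exists]
    exact ⟨_, G.colorable_of_fintype⟩
  set m := (G.chromaticNumber).toNat with hm
  obtain ⟨C⟩ : G.Colorable m := G.colorable_chromaticNumber_of_fintype
  set l := locationDominationNumber G with hl
  have hmem : l ∈ {n : ℕ | ∃ S : Set V, IsLocatingDominating G S ∧ S.ncard = n} := by
    apply Nat.sInf_mem
    refine ⟨(Set.univ : Set V).ncard, Set.univ, ⟨?_, ?_⟩, rfl⟩
    · intro v hv; exact absurd (Set.mem_univ v) hv
    · intro u hu; exact absurd (Set.mem_univ u) hu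
  obtain ⟨S, hS, hScard⟩ := hmem
  have hcard : Fintype.card S = l := by
    rw [← hScard, ← Nat.card_coe_set_eq, Nat.card_eq_fintype_card]
  let e : S ≃ Fin l := Fintype.equivFinOfCardEq hcard
  let c : V → Fin (m + l) := fun v =>
    if h : v ∈ S then Fin.natAdd m (e ⟨v, h⟩) else Fin.castAdd l (C v)
  have uniq : ∀ s : V, s ∈ S → ∀ w : V, c w = c s → w = s := by
    intro s hs w hcw
    by_cases hw : w ∈ S
    · have hval : m + ((e ⟨w, hw⟩) : Fin l).val = m + ((e ⟨s, hs⟩) : Fin l).val := by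
        have h0 : (c w).val = (c s).val := congrArg Fin.val hcw
        simpa [c, hw, hs] using h0
      have heq : e ⟨w, hw⟩ = e ⟨s, hs⟩ := Fin.ext (by omega)
      exact congrArg Subtype.val (e.injective heq)
    · exfalso
      have h1 : (c w).val < m := by simp [c, hw]
      have h2 : m ≤ (c s).val := by simp [c, hs]
      omega
  have hNL : IsNLColoring G c := by
    constructor
    · intro u v hadj hcv
      by_cases hv : v ∈ S
      · exact G.ne_of_adj hadj (uniq v hv u hcv)
      · by_cases hu : u ∈ S
        · exact G.ne_of_adj hadj (uniq u hu v hcv.symm).symm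
        · have h0 : Fin.castAdd l (C u) = Fin.castAdd l (C v) := by
            simpa [c, hu, hv] using hcv
          have : C u = C v := Fin.castAdd_injective m l h0
          exact C.valid hadj this
    · intro u v huv hcv himg
      have hu : u ∉ S := fun hu => huv (uniq u hu v hcv.symm).symm
      have hv : v ∉ S := fun hv => huv (uniq v hv u hcv)
      have key : ∀ a b : V, c '' G.neighborSet a = c '' G.neighborSet b →
          ∀ s, s ∈ G.neighborSet a ∩ S → s ∈ G.neighborSet b ∩ S := by
        rintro a b hab s ⟨hsa, hsS⟩
        have : c s ∈ c '' G.neighborSet b := hab ▸ ⟨s, hsa, rfl⟩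
        obtain ⟨w, hw, hws⟩ := this
        have := uniq s hsS w hws
        subst this
        exact ⟨hw, hsS⟩
      exact hS.2 u hu v hv huv
        (Set.Subset.antisymm (key u v himg) (key v u himg.symm))
  have hle : nlChromaticNumber G ≤ m + l := Nat.sInf_le ⟨c, hNL⟩
  calc (nlChromaticNumber G : ℕ∞) ≤ ((m + l : ℕ) : ℕ∞) := Nat.cast_le.mpr hle
    _ = (m : ℕ∞) + (l : ℕ∞) := by push_cast; ring
    _ = G.chromaticNumber + (l : ℕ∞) := by rw [hm, ENat.coe_toNat hne]
end

section
/- For each pair of integers h, k with 3 ≤ h ≤ k, there exists a connected finite simple graph G with chromatic number χ(G) = h and neighbor-locating chromatic number χ_NL(G) = k. -/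
open SimpleGraph

/-!
A proper coloring must separate adjacent vertices, and a neighbor-locating one must also separate
twins (distinct vertices with the same open neighborhood). In the complete split graph on `k`
vertices, a clique of size `h - 1` joined to an independent set of size `k - h + 1`, every two
vertices are adjacent or twins, so `χ_NL = k`, while `χ = h` because the independent set can
share a single extra color.
-/

section NLColoring

variable {V : Type*} {G : SimpleGraph V}

theorem isNLColoring_of_injective {k : ℕ} {c : V → Fin k} (hc : Function.Injective c) :
    IsNLColoring G c :=
  ⟨fun _ _ hadj he => hadj.ne (hc he), fun _ _ huv he => absurd (hc he) huv⟩

theorem IsNLColoring.injective {k : ℕ} {c : V → Fin k} (hc : IsNLColoring G c)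
    (hG : ∀ u v, u ≠ v → G.Adj u v ∨ G.neighborSet u = G.neighborSet v) :
    Function.Injective c := by
  intro u v he
  by_contra huv
  rcases hG u v huv with hadj | htwin
  · exact hc.1 u v hadj he
  · exact hc.2 u v huv he (by rw [htwin])

theorem nlChromaticNumber_eq_card [Fintype V]
    (hG : ∀ u v, u ≠ v → G.Adj u v ∨ G.neighborSet u = G.neighborSet v) :
    nlChromaticNumber G = Fintype.card V := by
  have hcard : Fintype.card V ∈ {k : ℕ | ∃ c : V → Fin k, IsNLColoring G c} :=
    ⟨Fintype.equivFin V, isNLColoring_of_injective (Fintype.equivFin V).injective⟩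
  refine le_antisymm (Nat.sInf_le hcard) (le_csInf ⟨_, hcard⟩ ?_)
  rintro k ⟨c, hc⟩
  simpa using Fintype.card_le_of_injective c (hc.injective hG)

end NLColoring

theorem SimpleGraph.connected_of_forall_adj {V : Type*} {G : SimpleGraph V} (v : V)
    (hv : ∀ w, w ≠ v → G.Adj v w) : G.Connected := by
  refine G.connected_iff_exists_forall_reachable.mpr ⟨v, fun w => ?_⟩
  by_cases hw : w = v
  · exact hw ▸ Reachable.refl w
  · exact (hv w hw).reachable

/-- The clique is `{i | i < s}`, the independent set its complement. -/
def completeSplitGraph (k s : ℕ) : SimpleGraph (Fin k) :=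
  SimpleGraph.fromRel fun i _ => i.val < s

namespace completeSplitGraph

variable {k s : ℕ}

theorem adj_iff {i j : Fin k} :
    (completeSplitGraph k s).Adj i j ↔ i ≠ j ∧ (i.val < s ∨ j.val < s) :=
  SimpleGraph.fromRel_adj _ i j

theorem connected (hs : 0 < s) (hk : 0 < k) : (completeSplitGraph k s).Connected :=
  connected_of_forall_adj ⟨0, hk⟩ fun _ hw => adj_iff.mpr ⟨Ne.symm hw, Or.inl hs⟩

theorem neighborSet_eq {i j : Fin k} (hi : s ≤ i.val) (hj : s ≤ j.val) :
    (completeSplitGraph k s).neighborSet i = (completeSplitGraph k s).neighborSet j := by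
  ext l
  simp only [mem_neighborSet, adj_iff]
  omega

theorem adj_or_neighborSet_eq {i j : Fin k} (hij : i ≠ j) :
    (completeSplitGraph k s).Adj i j ∨
      (completeSplitGraph k s).neighborSet i = (completeSplitGraph k s).neighborSet j := by
  by_cases hi : i.val < s
  · exact Or.inl (adj_iff.mpr ⟨hij, Or.inl hi⟩)
  by_cases hj : j.val < s
  · exact Or.inl (adj_iff.mpr ⟨hij, Or.inr hj⟩)
  · exact Or.inr (neighborSet_eq (not_lt.mp hi) (not_lt.mp hj))

theorem nlChromaticNumber_eq : nlChromaticNumber (completeSplitGraph k s) = k := by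
  simpa using nlChromaticNumber_eq_card fun _ _ => adj_or_neighborSet_eq

theorem colorable : (completeSplitGraph k s).Colorable (s + 1) :=
  ⟨Coloring.mk (fun i => ⟨min i.val s, by omega⟩) fun {i j} hadj he => by
    rw [adj_iff, Ne, Fin.ext_iff] at hadj
    rw [Fin.mk.injEq] at he
    omega⟩

theorem isClique_Iic (hs : s < k) :
    (completeSplitGraph k s).IsClique (Finset.Iic (⟨s, hs⟩ : Fin k) : Set (Fin k)) := by
  intro i hi j hj hij
  simp only [Finset.coe_Iic, Set.mem_Iic, Fin.le_def] at hi hj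
  exact adj_iff.mpr ⟨hij, by omega⟩

theorem chromaticNumber_eq (hs : s < k) : (completeSplitGraph k s).chromaticNumber = s + 1 := by
  refine le_antisymm colorable.chromaticNumber_le ?_
  simpa using (isClique_Iic hs).card_le_chromaticNumber

end completeSplitGraph

/-- For each pair of integers `3 ≤ h ≤ k`, there is a connected finite graph with
chromatic number `h` and neighbor-locating chromatic number `k`. -/
theorem exists_connected_graph_chromaticNumber_eq_and_nlChromaticNumber_eq
    (h k : ℕ) (hh : 3 ≤ h) (hk : h ≤ k) :
    ∃ (n : ℕ) (G : SimpleGraph (Fin n)), G.Connected ∧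
      G.chromaticNumber = (h : ℕ∞) ∧ nlChromaticNumber G = k := by
  refine ⟨k, completeSplitGraph k (h - 1), completeSplitGraph.connected (by omega) (by omega),
    ?_, completeSplitGraph.nlChromaticNumber_eq⟩
  rw [completeSplitGraph.chromaticNumber_eq (by omega)]
  norm_cast
  omega
end

section
/- Let G be a connected finite simple graph of order n ≥ 3. If the diameter of G is at most 2, then χ_L(G) = χ_NL(G). -/
open SimpleGraph

/-- The distance from a vertex to a set of vertices. -/
noncomputable def distToSet {V : Type*} (G : SimpleGraph V) (v : V) (S : Set V) : ℕ :=
  sInf (G.dist v '' S)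

/-- A coloring is *metric-locating* if any two distinct vertices with the same color are at
different distances from some color class. -/
def IsMLColoring {V : Type*} (G : SimpleGraph V) {k : ℕ} (c : V → Fin k) : Prop :=
  (∀ u v : V, G.Adj u v → c u ≠ c v) ∧
  ∀ u v : V, u ≠ v → c u = c v →
    ∃ j : Fin k, distToSet G u (c ⁻¹' {j}) ≠ distToSet G v (c ⁻¹' {j})

/-- The metric-locating chromatic number: the least `k` admitting an ML-coloring. -/
noncomputable def mlChromaticNumber {V : Type*} (G : SimpleGraph V) : ℕ :=
  sInf {k : ℕ | ∃ c : V → Fin k, IsMLColoring G c}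


open SimpleGraph

section Aux
variable {V : Type*} [Fintype V] {G : SimpleGraph V} {k : ℕ} {c : V → Fin k}

open Classical in
lemma distToSet_eq (hc : G.Connected) (hd : G.diam ≤ 2) (u : V) (j : Fin k)
    (hj : j ≠ c u) (hne : (c ⁻¹' {j}).Nonempty) :
    distToSet G u (c ⁻¹' {j}) = if ∃ w, G.Adj u w ∧ c w = j then 1 else 2 := by
  have hNE : Nonempty V := ⟨hne.choose⟩
  have htop : G.ediam ≠ ⊤ := by
    obtain ⟨a, b, hab⟩ := G.exists_edist_eq_ediam_of_finite
    rw [← hab, edist_ne_top_iff_reachable]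
    exact hc a b
  have hdle : ∀ w : V, G.dist u w ≤ 2 := fun w ↦ (G.dist_le_diam htop).trans hd
  have hpos : ∀ w ∈ c ⁻¹' {j}, 0 < G.dist u w := by
    intro w hw
    exact hc.pos_dist_of_ne (fun h ↦ hj (h ▸ hw.symm))
  have hne' : (G.dist u '' (c ⁻¹' {j})).Nonempty := hne.image _
  split_ifs with h
  · obtain ⟨w, haw, hcw⟩ := h
    apply le_antisymm
    · exact Nat.sInf_le ⟨w, hcw, dist_eq_one_iff_adj.mpr haw⟩
    · exact le_csInf hne' (by rintro n ⟨w, hw, rfl⟩; exact hpos w hw)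
  · apply le_antisymm
    · obtain ⟨w, hw⟩ := hne
      exact (Nat.sInf_le (⟨w, hw, rfl⟩ : G.dist u w ∈ G.dist u '' (c ⁻¹' {j}))).trans (hdle w)
    · apply le_csInf hne'
      rintro n ⟨w, hw, rfl⟩
      rcases Nat.lt_or_ge (G.dist u w) 2 with h2 | h2
      · interval_cases hh : G.dist u w
        · exact absurd hh (Nat.pos_iff_ne_zero.mp (hpos w hw))
        · exact absurd (⟨w, dist_eq_one_iff_adj.mp hh, hw⟩ : ∃ w, G.Adj u w ∧ c w = j) h
      · exact h2

lemma distToSet_self (u : V) : distToSet G u (c ⁻¹' {c u}) = 0 :=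
  Nat.sInf_eq_zero.mpr (Or.inl ⟨u, rfl, by simp⟩)

lemma mem_image_iff (x : V) (j : Fin k) :
    j ∈ c '' G.neighborSet x ↔ ∃ w, G.Adj x w ∧ c w = j := by
  simp [Set.mem_image, SimpleGraph.mem_neighborSet]

lemma nl_iff_ml (hc : G.Connected) (hd : G.diam ≤ 2) :
    IsNLColoring G c ↔ IsMLColoring G c := by
  constructor
  · rintro ⟨hp, hnl⟩
    refine ⟨hp, fun u v huv hcuv ↦ ?_⟩
    have hdiff := hnl u v huv hcuv
    obtain ⟨j, hj⟩ : ∃ j, ¬(j ∈ c '' G.neighborSet u ↔ j ∈ c '' G.neighborSet v) := by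
      rw [← not_forall]; exact fun h ↦ hdiff (Set.ext h)
    have hju : j ≠ c u := by
      rintro rfl
      rcases Classical.em (c u ∈ c '' G.neighborSet u) with h | h
      · obtain ⟨w, hw, hcw⟩ := (mem_image_iff u (c u)).mp h
        exact hp u w hw hcw.symm
      · rcases Classical.em (c u ∈ c '' G.neighborSet v) with h2 | h2
        · obtain ⟨w, hw, hcw⟩ := (mem_image_iff v (c u)).mp h2
          exact hp v w hw (hcw.trans hcuv).symm
        · exact hj ⟨fun a ↦ absurd a h, fun a ↦ absurd a h2⟩
    have hjv : j ≠ c v := hcuv ▸ hju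
    refine ⟨j, ?_⟩
    rcases Classical.em (j ∈ c '' G.neighborSet u) with h | h
    · have h2 : j ∉ c '' G.neighborSet v := fun a ↦ hj ⟨fun _ ↦ a, fun _ ↦ h⟩
      obtain ⟨w, hw, hcw⟩ := (mem_image_iff u j).mp h
      rw [distToSet_eq hc hd u j hju ⟨w, hcw⟩, distToSet_eq hc hd v j hjv ⟨w, hcw⟩,
        if_pos ⟨w, hw, hcw⟩, if_neg (fun a ↦ h2 ((mem_image_iff v j).mpr a))]
      decide
    · have h2 : j ∈ c '' G.neighborSet v := by
        rcases Classical.em (j ∈ c '' G.neighborSet v) with h2 | h2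
        · exact h2
        · exact absurd ⟨fun a ↦ absurd a h, fun a ↦ absurd a h2⟩ hj
      obtain ⟨w, hw, hcw⟩ := (mem_image_iff v j).mp h2
      rw [distToSet_eq hc hd u j hju ⟨w, hcw⟩, distToSet_eq hc hd v j hjv ⟨w, hcw⟩,
        if_neg (fun a ↦ h ((mem_image_iff u j).mpr a)), if_pos ⟨w, hw, hcw⟩]
      decide
  · rintro ⟨hp, hml⟩
    classical
    refine ⟨hp, fun u v huv hcuv hset ↦ ?_⟩
    obtain ⟨j, hj⟩ := hml u v huv hcuv
    have hju : j ≠ c u := by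
      rintro rfl
      rw [distToSet_self, hcuv, distToSet_self] at hj
      exact hj rfl
    have hjv : j ≠ c v := hcuv ▸ hju
    have hne : (c ⁻¹' {j}).Nonempty := by
      by_contra h
      rw [Set.not_nonempty_iff_eq_empty] at h
      simp [distToSet, h] at hj
    rw [distToSet_eq hc hd u j hju hne, distToSet_eq hc hd v j hjv hne] at hj
    apply hj
    apply if_congr ?_ rfl rfl
    rw [← mem_image_iff, ← mem_image_iff, hset]
end Aux

/-- If `G` is a connected graph of order at least 3 with diameter at most 2,
then `χ_L(G) = χ_NL(G)`. -/
theorem mlChromaticNumber_eq_nlChromaticNumber_of_diam_le_two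
    {V : Type*} [Fintype V] (G : SimpleGraph V) (hc : G.Connected)
    (hn : 3 ≤ Fintype.card V) (hd : G.diam ≤ 2) :
    mlChromaticNumber G = nlChromaticNumber G := by
  unfold mlChromaticNumber nlChromaticNumber
  congr 1
  ext k
  exact ⟨fun ⟨c, h⟩ ↦ ⟨c, (nl_iff_ml hc hd).mpr h⟩, fun ⟨c, h⟩ ↦ ⟨c, (nl_iff_ml hc hd).mp h⟩⟩
end

section
/- Let G be a connected finite simple graph of order n ≥ 3. If the diameter of G is at least 4, then χ_NL(G) ≤ n − 2. -/
open SimpleGraph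

private lemma dist_getVert_le {V : Type*} {G : SimpleGraph V} (hc : G.Connected)
    {u v : V} (p : G.Walk u v) :
    ∀ i j : ℕ, i ≤ j → j ≤ p.length → G.dist (p.getVert i) (p.getVert j) ≤ j - i := by
  intro i j
  induction j with
  | zero =>
    intro hij _
    have : i = 0 := Nat.le_zero.mp hij
    subst this
    simp [SimpleGraph.dist_self]
  | succ j ih =>
    intro hij hj
    rcases Nat.lt_or_ge i (j + 1) with h | h
    · have hij' : i ≤ j := Nat.lt_succ_iff.mp h
      have h1 : G.dist (p.getVert j) (p.getVert (j + 1)) ≤ 1 := by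
        have hadj : G.Adj (p.getVert j) (p.getVert (j + 1)) :=
          p.adj_getVert_succ (by omega)
        simpa using SimpleGraph.dist_le (SimpleGraph.Walk.cons hadj SimpleGraph.Walk.nil)
      have h2 := ih hij' (by omega)
      have h3 := hc.dist_triangle (u := p.getVert i) (v := p.getVert j) (w := p.getVert (j + 1))
      omega
    · have : i = j + 1 := le_antisymm hij h
      subst this
      simp [SimpleGraph.dist_self]

/-- If `G` is a connected graph of order `n ≥ 3` with diameter at least 4,
then `χ_NL(G) ≤ n - 2`. -/
theorem nlChromaticNumber_le_card_sub_two_of_four_le_diam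
    {V : Type*} [Fintype V] (G : SimpleGraph V) (hc : G.Connected)
    (hn : 3 ≤ Fintype.card V) (hd : 4 ≤ G.diam) :
    nlChromaticNumber G ≤ Fintype.card V - 2 := by
  classical
  have hne : Nonempty V := Fintype.card_pos_iff.mp (by omega)
  obtain ⟨u, v, huv⟩ := G.exists_dist_eq_diam
  have hduv : 4 ≤ G.dist u v := huv ▸ hd
  obtain ⟨p, hp⟩ := hc.exists_walk_length_eq_dist u v
  have hL : 4 ≤ p.length := by omega
  set x : ℕ → V := fun i => p.getVert i with hx
  -- lower bound on distances along a geodesic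
  have hge : ∀ i j : ℕ, i ≤ j → j ≤ 4 → j - i ≤ G.dist (x i) (x j) := by
    intro i j hij hj4
    have h1 : G.dist u (x i) ≤ i := by
      have := dist_getVert_le hc p 0 i (Nat.zero_le _) (by omega)
      simpa [p.getVert_zero] using this
    have h2 : G.dist (x j) v ≤ p.length - j := by
      have := dist_getVert_le hc p j p.length (by omega) le_rfl
      simpa [p.getVert_length] using this
    have h3 := hc.dist_triangle (u := u) (v := x i) (w := x j)
    have h4 := hc.dist_triangle (u := u) (v := x j) (w := v)
    omega
  have hnadj : ∀ i j : ℕ, i ≤ j → j ≤ 4 → 2 ≤ j - i → ¬ G.Adj (x i) (x j) := by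
    intro i j hij hj4 h2 hadj
    have h1 : G.dist (x i) (x j) ≤ 1 := by
      simpa using SimpleGraph.dist_le (SimpleGraph.Walk.cons hadj SimpleGraph.Walk.nil)
    have := hge i j hij hj4
    omega
  have hneq : ∀ i j : ℕ, i ≤ j → j ≤ 4 → 1 ≤ j - i → x i ≠ x j := by
    intro i j hij hj4 h1 heq
    have := hge i j hij hj4
    rw [heq] at this
    simp [SimpleGraph.dist_self] at this
    omega
  -- adjacency along the walk
  have hadj12 : G.Adj (x 1) (x 2) := p.adj_getVert_succ (by omega)
  have hadj23 : G.Adj (x 2) (x 3) := p.adj_getVert_succ (by omega)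
  -- distinctness facts
  have h01 : x 0 ≠ x 1 := hneq 0 1 (by omega) (by omega) (by omega)
  have h02 : x 0 ≠ x 2 := hneq 0 2 (by omega) (by omega) (by omega)
  have h03 : x 0 ≠ x 3 := hneq 0 3 (by omega) (by omega) (by omega)
  have h04 : x 0 ≠ x 4 := hneq 0 4 (by omega) (by omega) (by omega)
  have h12 : x 1 ≠ x 2 := hneq 1 2 (by omega) (by omega) (by omega)
  have h13 : x 1 ≠ x 3 := hneq 1 3 (by omega) (by omega) (by omega)
  have h14 : x 1 ≠ x 4 := hneq 1 4 (by omega) (by omega) (by omega)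
  have h23 : x 2 ≠ x 3 := hneq 2 3 (by omega) (by omega) (by omega)
  have h24 : x 2 ≠ x 4 := hneq 2 4 (by omega) (by omega) (by omega)
  have h34 : x 3 ≠ x 4 := hneq 3 4 (by omega) (by omega) (by omega)
  -- non-adjacency facts
  have hna02 : ¬ G.Adj (x 0) (x 2) := hnadj 0 2 (by omega) (by omega) (by omega)
  have hna03 : ¬ G.Adj (x 0) (x 3) := hnadj 0 3 (by omega) (by omega) (by omega)
  have hna14 : ¬ G.Adj (x 1) (x 4) := hnadj 1 4 (by omega) (by omega) (by omega)
  have hna24 : ¬ G.Adj (x 2) (x 4) := hnadj 2 4 (by omega) (by omega) (by omega)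
  -- the coloring
  set n := Fintype.card V with hn'
  set f : V → V := fun y => if y = x 3 then x 0 else if y = x 4 then x 1 else y with hf
  have hfmem : ∀ y : V, f y ≠ x 3 ∧ f y ≠ x 4 := by
    intro y
    simp only [hf]
    split_ifs with h1 h2
    · exact ⟨h03, h04⟩
    · exact ⟨h13, h14⟩
    · exact ⟨h1, h2⟩
  have hcard : Fintype.card {y : V // y ≠ x 3 ∧ y ≠ x 4} = n - 2 := by
    rw [Fintype.card_subtype]
    have : (Finset.univ.filter fun y : V => y ≠ x 3 ∧ y ≠ x 4)
        = Finset.univ \ {x 3, x 4} := by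
      ext y; simp [and_comm]
    rw [this, Finset.card_sdiff_of_subset (Finset.subset_univ _), Finset.card_pair h34]
    rfl
  let e : {y : V // y ≠ x 3 ∧ y ≠ x 4} ≃ Fin (n - 2) := Fintype.equivFinOfCardEq hcard
  set c : V → Fin (n - 2) := fun y => e ⟨f y, hfmem y⟩ with hcdef
  have hcinj : ∀ a b : V, c a = c b → f a = f b := by
    intro a b h
    have := e.injective h
    exact congrArg Subtype.val this
  have hcases : ∀ a b : V, f a = f b →
      a = b ∨ (a = x 0 ∧ b = x 3) ∨ (a = x 3 ∧ b = x 0)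
        ∨ (a = x 1 ∧ b = x 4) ∨ (a = x 4 ∧ b = x 1) := by
    intro a b hab
    simp only [hf] at hab
    by_cases ha3 : a = x 3
    · rw [if_pos ha3] at hab
      by_cases hb3 : b = x 3
      · left; rw [ha3, hb3]
      · rw [if_neg hb3] at hab
        by_cases hb4 : b = x 4
        · rw [if_pos hb4] at hab; exact absurd hab h01
        · rw [if_neg hb4] at hab; right; right; left; exact ⟨ha3, hab.symm⟩
    · rw [if_neg ha3] at hab
      by_cases ha4 : a = x 4
      · rw [if_pos ha4] at hab
        by_cases hb3 : b = x 3
        · rw [if_pos hb3] at hab; exact absurd hab.symm h01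
        · rw [if_neg hb3] at hab
          by_cases hb4 : b = x 4
          · left; rw [ha4, hb4]
          · rw [if_neg hb4] at hab; right; right; right; right; exact ⟨ha4, hab.symm⟩
      · rw [if_neg ha4] at hab
        by_cases hb3 : b = x 3
        · rw [if_pos hb3] at hab; right; left; exact ⟨hab, hb3⟩
        · rw [if_neg hb3] at hab
          by_cases hb4 : b = x 4
          · rw [if_pos hb4] at hab; right; right; right; left; exact ⟨hab, hb4⟩
          · rw [if_neg hb4] at hab; left; exact hab
  have hx2 : ∀ w : V, c w = c (x 2) → w = x 2 := by
    intro w hw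
    rcases hcases w (x 2) (hcinj _ _ hw) with h | ⟨h1, h2⟩ | ⟨h1, h2⟩ | ⟨h1, h2⟩ | ⟨h1, h2⟩
    · exact h
    · exact absurd h2 h23
    · exact absurd h2 h02.symm
    · exact absurd h2 h24
    · exact absurd h2 h12.symm
  -- key distinguishing facts
  have main03 : c '' (G.neighborSet (x 0)) ≠ c '' (G.neighborSet (x 3)) := by
    intro heq
    have hmem : c (x 2) ∈ c '' (G.neighborSet (x 3)) :=
      ⟨x 2, hadj23.symm, rfl⟩
    rw [← heq] at hmem
    obtain ⟨w, hw, hww⟩ := hmem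
    have := hx2 w hww
    subst this
    exact hna02 hw
  have main14 : c '' (G.neighborSet (x 1)) ≠ c '' (G.neighborSet (x 4)) := by
    intro heq
    have hmem : c (x 2) ∈ c '' (G.neighborSet (x 1)) :=
      ⟨x 2, hadj12, rfl⟩
    rw [heq] at hmem
    obtain ⟨w, hw, hww⟩ := hmem
    have := hx2 w hww
    subst this
    exact hna24 (G.adj_symm hw)
  have hNL : IsNLColoring G c := by
    constructor
    · intro a b hab hcc
      rcases hcases a b (hcinj _ _ hcc) with h | ⟨h1, h2⟩ | ⟨h1, h2⟩ | ⟨h1, h2⟩ | ⟨h1, h2⟩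
      · exact hab.ne h
      · subst h1; subst h2; exact hna03 hab
      · subst h1; subst h2; exact hna03 (G.adj_symm hab)
      · subst h1; subst h2; exact hna14 hab
      · subst h1; subst h2; exact hna14 (G.adj_symm hab)
    · intro a b hab hcc
      rcases hcases a b (hcinj _ _ hcc) with h | ⟨h1, h2⟩ | ⟨h1, h2⟩ | ⟨h1, h2⟩ | ⟨h1, h2⟩
      · exact absurd h hab
      · subst h1; subst h2; exact main03
      · subst h1; subst h2; exact main03.symm
      · subst h1; subst h2; exact main14
      · subst h1; subst h2; exact main14.symm
  exact Nat.sInf_le ⟨c, hNL⟩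
end

section
/- Let G be a non-trivial finite simple graph of order n and maximum degree Δ. If χ_NL(G) = k and Δ ≤ k − 1, then n ≤ k·2^(k−1) and n ≤ k·∑_{j=0}^{Δ} C(k−1, j), where C(·,·) denotes the binomial coefficient. -/
open SimpleGraph

lemma count_small_subsets {α : Type*} [DecidableEq α] (s : Finset α) (d : ℕ) :
    (s.powerset.filter (fun S => S.card ≤ d)).card
      = ∑ j ∈ Finset.range (d + 1), s.card.choose j := by
  have heq : s.powerset.filter (fun S => S.card ≤ d)
      = (Finset.range (d + 1)).biUnion (fun j => s.powersetCard j) := by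
    ext S
    simp only [Finset.mem_filter, Finset.mem_powerset, Finset.mem_biUnion,
      Finset.mem_range, Finset.mem_powersetCard, Nat.lt_succ_iff]
    constructor
    · rintro ⟨h1, h2⟩; exact ⟨S.card, h2, h1, rfl⟩
    · rintro ⟨j, hj, h1, rfl⟩; exact ⟨h1, hj⟩
  rw [heq, Finset.card_biUnion]
  · simp [Finset.card_powersetCard]
  · intro i _ j _ hij
    simp only [Finset.disjoint_left, Finset.mem_powersetCard]
    rintro S ⟨-, rfl⟩ ⟨-, h⟩
    exact hij h

/-- Bounds on the order of a non-trivial graph in terms of its NL-chromatic number `k`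
and maximum degree `Δ ≤ k - 1`. -/
theorem card_le_of_nlChromaticNumber_eq
    {V : Type*} [Fintype V] (G : SimpleGraph V) [DecidableRel G.Adj]
    (hn : 2 ≤ Fintype.card V) (k : ℕ) (hk : nlChromaticNumber G = k)
    (hΔ : G.maxDegree ≤ k - 1) :
    Fintype.card V ≤ k * 2 ^ (k - 1) ∧
      Fintype.card V ≤ k * ∑ j ∈ Finset.range (G.maxDegree + 1), (k - 1).choose j := by
  classical
  obtain ⟨c, hcp, hcn⟩ : ∃ c : V → Fin k, IsNLColoring G c := by
    rw [← hk]
    have hmem : Fintype.card V ∈ {m : ℕ | ∃ c : V → Fin m, IsNLColoring G c} := by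
      refine ⟨Fintype.equivFin V, fun u v h => ?_, fun u v huv h => ?_⟩

      · exact fun he => G.ne_of_adj h ((Fintype.equivFin V).injective he)
      · exact absurd ((Fintype.equivFin V).injective h) huv
    exact Nat.sInf_mem ⟨_, hmem⟩
  have hV : Nonempty V := Fintype.card_pos_iff.mp (by omega)
  have hk0 : 0 < k := by
    rcases Nat.eq_zero_or_pos k with h | h
    · subst h; exact (c hV.some).elim0
    · exact h
  set Δ := G.maxDegree with hΔdef
  set M := ∑ j ∈ Finset.range (Δ + 1), (k - 1).choose j with hM
  have key : Fintype.card V ≤ k * M := by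
    have hcard : Fintype.card V
        = ∑ a : Fin k, (Finset.univ.filter (fun v => c v = a)).card := by
      rw [← Finset.card_univ]
      exact Finset.card_eq_sum_card_fiberwise (fun x _ => Finset.mem_univ _)
    rw [hcard]
    have hfib : ∀ a : Fin k, (Finset.univ.filter (fun v => c v = a)).card ≤ M := by
      intro a
      have hinj : Set.InjOn (fun v => (G.neighborFinset v).image c)
          ↑(Finset.univ.filter (fun v => c v = a)) := by
        intro u hu v hv huv
        by_contra hne
        have hcu : c u = c v := by
          simp only [Finset.coe_filter, Set.mem_setOf_eq] at hu hv
          rw [hu.2, hv.2]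
        apply hcn u v hne hcu
        have h2 : (G.neighborFinset u).image c = (G.neighborFinset v).image c := huv
        have h3 : (↑((G.neighborFinset u).image c) : Set (Fin k))
            = ↑((G.neighborFinset v).image c) := by rw [h2]
        simpa [Finset.coe_image, SimpleGraph.neighborFinset_def, Set.coe_toFinset] using h3
      have hmaps : ∀ v ∈ Finset.univ.filter (fun v => c v = a),
          (G.neighborFinset v).image c
            ∈ (Finset.univ.erase a).powerset.filter (fun S => S.card ≤ Δ) := by
        intro v hv
        simp only [Finset.mem_filter] at hv
        refine Finset.mem_filter.mpr ⟨Finset.mem_powerset.mpr ?_, ?_⟩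
        · intro x hx
          simp only [Finset.mem_image, mem_neighborFinset] at hx
          obtain ⟨w, hw, rfl⟩ := hx
          refine Finset.mem_erase.mpr ⟨?_, Finset.mem_univ _⟩
          rw [← hv.2]
          exact (hcp v w hw).symm
        · calc ((G.neighborFinset v).image c).card ≤ (G.neighborFinset v).card :=
              Finset.card_image_le
            _ = G.degree v := (G.card_neighborFinset_eq_degree v).symm
            _ ≤ Δ := G.degree_le_maxDegree v
      have := Finset.card_le_card_of_injOn _ hmaps hinj
      refine le_trans this ?_
      rw [count_small_subsets]
      have : (Finset.univ.erase a).card = k - 1 := by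
        rw [Finset.card_erase_of_mem (Finset.mem_univ a), Finset.card_univ,
          Fintype.card_fin]
      rw [this]
    calc ∑ a : Fin k, (Finset.univ.filter (fun v => c v = a)).card
        ≤ ∑ _a : Fin k, M := Finset.sum_le_sum (fun a _ => hfib a)
      _ = k * M := by simp [Finset.sum_const, Finset.card_univ, mul_comm]
  refine ⟨?_, key⟩
  refine le_trans key (Nat.mul_le_mul_left k ?_)
  calc M ≤ ∑ j ∈ Finset.range (k - 1 + 1), (k - 1).choose j := by
        apply Finset.sum_le_sum_of_subset
        exact Finset.range_subset_range.mpr (by omega)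
    _ = 2 ^ (k - 1) := Nat.sum_range_choose (k - 1)
end

section
/- For every integer k ≥ 3, there exists a connected finite simple graph G of order k·(2^(k−1) − 1), with exactly k·(k−1)·2^(2k−5) edges, diameter 3, minimum degree 2^(k−2), maximum degree (k−1)·2^(k−2), and neighbor-locating chromatic number χ_NL(G) = k. -/
open SimpleGraph

/-!
The extremal graph has as vertices the pairs `(i, A)` of a color `i` and a nonempty set `A`
of colors with `i ∉ A`, with `(i, A) ~ (j, B)` iff `j ∈ A` and `i ∈ B`. Coloring `(i, A)` by `i`
is neighbor-locating because the colors around `(i, A)` are exactly `A`. Conversely, in any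
neighbor-locating `m`-coloring of a graph without isolated vertices, `v ↦ (c v, c '' N(v))` is an
injection into the `m`-color pairs, so such a graph has at most `m (2^(m-1) - 1)` vertices; hence
fewer than `k` colors cannot work. The vertex `(i, A)` has `2^(k-2)` neighbors of each color
in `A`, which gives the degrees and, by the handshake lemma, the edge count. Two vertices
`(i, A)`, `(j, B)` are joined through `(a, {i, b})` and `(b, {j, a})` for `a ∈ A`, `b ∈ B`
(through `(a, {i, j})` if `a = b`), while `(a, {b})` and `(a, {c})` have no common neighbor.
-/

open Finset

namespace SimpleGraph

variable {V W : Type*} {G : SimpleGraph V} {G' : SimpleGraph W}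

lemma Hom.edist_le (f : G →g G') (u v : V) : G'.edist (f u) (f v) ≤ G.edist u v := by
  rw [edist_eq_sInf (G := G)]
  refine le_sInf ?_
  rintro _ ⟨p, rfl⟩
  simpa using SimpleGraph.edist_le (p.map f)

lemma Iso.edist_eq (e : G ≃g G') (u v : V) : G'.edist (e u) (e v) = G.edist u v :=
  le_antisymm (e.toHom.edist_le u v) <| by simpa using e.symm.toHom.edist_le (e u) (e v)

lemma Iso.ediam_eq (e : G ≃g G') : G.ediam = G'.ediam := by
  simp_rw [ediam_eq_iSup_iSup_edist, ← e.edist_eq]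
  rw [e.surjective.iSup_comp fun u => ⨆ v, G'.edist u (e v)]
  exact iSup_congr fun u => e.surjective.iSup_comp (G'.edist u)

lemma Iso.diam_eq (e : G ≃g G') : G.diam = G'.diam := by
  rw [diam, diam, e.ediam_eq]

end SimpleGraph

section NeighborLocating

variable {V W : Type*} {G : SimpleGraph V} {G' : SimpleGraph W} {m : ℕ}

lemma IsNLColoring.comp_iso {c : W → Fin m} (hc : IsNLColoring G' c) (e : G ≃g G') :
    IsNLColoring G (c ∘ e) := by
  have himage (v : V) : (c ∘ e) '' G.neighborSet v = c '' G'.neighborSet (e v) := by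
    rw [Set.image_comp, e.image_neighborSet]
  refine ⟨fun u v huv => hc.1 _ _ (e.map_adj_iff.mpr huv), fun u v huv hcol => ?_⟩
  rw [himage, himage]
  exact hc.2 _ _ (e.injective.ne huv) hcol

lemma SimpleGraph.Iso.nlChromaticNumber_eq (e : G ≃g G') :
    nlChromaticNumber G = nlChromaticNumber G' := by
  unfold nlChromaticNumber
  congr! 3 with m
  exact ⟨fun ⟨c, hc⟩ => ⟨c ∘ e.symm, hc.comp_iso e.symm⟩, fun ⟨c, hc⟩ => ⟨c ∘ e, hc.comp_iso e⟩⟩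

end NeighborLocating

namespace Finset

variable {α : Type*} [DecidableEq α] [Fintype α]

lemma mem_Ioc_empty_erase_univ {i : α} {A : Finset α} :
    A ∈ Ioc ∅ (univ.erase i) ↔ i ∉ A ∧ A.Nonempty := by
  simp [subset_erase, and_comm]

lemma card_Ioc_empty_erase_univ (i : α) :
    #(Ioc ∅ (univ.erase i)) = 2 ^ (Fintype.card α - 1) - 1 := by
  simp [card_Ioc_finset]

lemma card_filter_mem_Ioc_empty_erase_univ (i j : α) :
    #{B ∈ Ioc ∅ (univ.erase j) | i ∈ B} = if i = j then 0 else 2 ^ (Fintype.card α - 2) := by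
  have hIcc : {B ∈ Ioc ∅ (univ.erase j) | i ∈ B} = Icc {i} (univ.erase j) := by
    ext B
    simp only [mem_filter, mem_Ioc, mem_Icc, singleton_subset_iff, empty_ssubset]
    exact ⟨fun ⟨⟨_, hB⟩, hi⟩ => ⟨hi, hB⟩, fun ⟨hi, hB⟩ => ⟨⟨⟨i, hi⟩, hB⟩, hi⟩⟩
  split_ifs with h
  · subst h
    simp [hIcc]
  · rw [hIcc, card_Icc_finset (by simpa using h)]
    simp only [card_erase_of_mem (mem_univ j), card_univ, card_singleton, Nat.sub_sub]

end Finset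

/-- `(i, A)` stands for a vertex of color `i` whose neighborhood shows exactly the colors in `A`. -/
abbrev ColorSignature (α : Type*) := {p : α × Finset α // p.1 ∉ p.2 ∧ p.2.Nonempty}

namespace ColorSignature

variable {α : Type*}

instance [Nontrivial α] : Nonempty (ColorSignature α) :=
  let ⟨a, b, hab⟩ := exists_pair_ne α
  ⟨⟨(a, {b}), by simpa using hab, singleton_nonempty b⟩⟩

variable [DecidableEq α] [Fintype α]

lemma sum_eq {M : Type*} [AddCommMonoid M] (f : α → Finset α → M) :
    ∑ v : ColorSignature α, f v.1.1 v.1.2 = ∑ i, ∑ A ∈ Ioc ∅ (univ.erase i), f i A := by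
  refine (Finset.sum_subtype {p | p.1 ∉ p.2 ∧ p.2.Nonempty} (by simp)
    fun p : α × Finset α => f p.1 p.2).symm.trans ?_
  exact sum_finset_product' _ _ _ fun p => by
    simp only [mem_filter, mem_univ, true_and, mem_Ioc_empty_erase_univ]

lemma card_eq :
    Fintype.card (ColorSignature α) = Fintype.card α * (2 ^ (Fintype.card α - 1) - 1) := by
  rw [Fintype.card_eq_sum_ones, sum_eq fun _ _ => 1]
  simp [card_Ioc_empty_erase_univ]

lemma sum_card_snd : ∑ v : ColorSignature α, #v.1.2 =
    Fintype.card α * (Fintype.card α - 1) * 2 ^ (Fintype.card α - 2) := by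
  have hcard (A : Finset α) : #A = ∑ j, if j ∈ A then 1 else 0 := by simp
  rw [sum_eq fun _ A => #A]
  simp_rw [hcard]
  -- count, for each pair of colors `i ≠ j`, the sets `A` with `i ∉ A` and `j ∈ A`
  refine (Finset.sum_congr rfl fun i _ => Finset.sum_comm).trans ?_
  simp_rw [← card_filter, card_filter_mem_Ioc_empty_erase_univ]
  simp [sum_ite, filter_ne', mul_assoc]

end ColorSignature

lemma IsNLColoring.card_le {V : Type*} [Fintype V] {G : SimpleGraph V} {m : ℕ} {c : V → Fin m}
    (hc : IsNLColoring G c) (hG : ∀ v, ∃ w, G.Adj v w) :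
    Fintype.card V ≤ m * (2 ^ (m - 1) - 1) := by
  classical
  let seen (v : V) : Finset (Fin m) := (c '' G.neighborSet v).toFinset
  have hseen (v : V) : (seen v : Set (Fin m)) = c '' G.neighborSet v := Set.coe_toFinset _
  have hproper (v : V) : c v ∉ seen v := by
    rw [← mem_coe, hseen]
    rintro ⟨w, hw, hcw⟩
    exact hc.1 v w hw hcw.symm
  have hnonempty (v : V) : (seen v).Nonempty := by
    obtain ⟨w, hw⟩ := hG v
    exact ⟨c w, by rw [← mem_coe, hseen]; exact ⟨w, hw, rfl⟩⟩
  let sig (v : V) : ColorSignature (Fin m) := ⟨(c v, seen v), hproper v, hnonempty v⟩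
  have hsig : Function.Injective sig := by
    intro u v huv
    simp only [sig, Subtype.mk.injEq, Prod.mk.injEq] at huv
    by_contra hne
    exact hc.2 u v hne huv.1 (by rw [← hseen, ← hseen, huv.2])
  simpa [ColorSignature.card_eq] using Fintype.card_le_of_injective sig hsig

lemma mul_two_pow_sub_one_lt_mul_two_pow_sub_one {m k : ℕ} (hk : 2 ≤ k) (hmk : m < k) :
    m * (2 ^ (m - 1) - 1) < k * (2 ^ (k - 1) - 1) := by
  have hpos : 0 < 2 ^ (k - 1) - 1 := Nat.sub_pos_of_lt (Nat.one_lt_two_pow (by omega))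
  calc m * (2 ^ (m - 1) - 1) ≤ m * (2 ^ (k - 1) - 1) := by gcongr; omega
    _ < k * (2 ^ (k - 1) - 1) := Nat.mul_lt_mul_of_pos_right hmk hpos

def signatureGraph (α : Type*) : SimpleGraph (ColorSignature α) where
  Adj u v := u.1.1 ∈ v.1.2 ∧ v.1.1 ∈ u.1.2
  symm := ⟨fun _ _ h => ⟨h.2, h.1⟩⟩
  loopless := ⟨fun u h => u.2.1 h.1⟩

namespace signatureGraph

open ColorSignature

variable {α : Type*}

@[simp]
lemma adj_iff {u v : ColorSignature α} :
    (signatureGraph α).Adj u v ↔ u.1.1 ∈ v.1.2 ∧ v.1.1 ∈ u.1.2 := Iff.rfl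

lemma image_fst_neighborSet (v : ColorSignature α) :
    (fun w : ColorSignature α => w.1.1) '' (signatureGraph α).neighborSet v = v.1.2 := by
  ext j
  refine ⟨fun ⟨w, hw, hwj⟩ => hwj ▸ hw.2, fun hj => ?_⟩
  have hji : j ≠ v.1.1 := by rintro rfl; exact v.2.1 hj
  exact ⟨⟨(j, {v.1.1}), by simpa using hji, singleton_nonempty _⟩, ⟨mem_singleton_self _, hj⟩, rfl⟩

lemma exists_adj (v : ColorSignature α) : ∃ w, (signatureGraph α).Adj v w := by
  obtain ⟨j, hj⟩ := v.2.2
  rw [← mem_coe, ← image_fst_neighborSet] at hj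
  obtain ⟨w, hw, -⟩ := hj
  exact ⟨w, hw⟩

section

variable [DecidableEq α]

instance : DecidableRel (signatureGraph α).Adj := fun _ _ => decidable_of_iff' _ adj_iff

lemma edist_le_three (u v : ColorSignature α) : (signatureGraph α).edist u v ≤ 3 := by
  obtain ⟨⟨i, A⟩, hiA, a, ha⟩ := u
  obtain ⟨⟨j, B⟩, hjB, b, hb⟩ := v
  have hai : a ≠ i := by rintro rfl; exact hiA ha
  have hbj : b ≠ j := by rintro rfl; exact hjB hb
  by_cases hab : a = b
  · subst hab
    let w : ColorSignature α := ⟨(a, {i, j}), by simp [hai, hbj], insert_nonempty _ _⟩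
    have hw : (signatureGraph α).Adj ⟨(i, A), hiA, a, ha⟩ w := by simp [w, ha]
    have hw' : (signatureGraph α).Adj w ⟨(j, B), hjB, a, hb⟩ := by simp [w, hb]
    calc _ ≤ ((hw.toWalk.concat hw').length : ℕ∞) := edist_le _
      _ ≤ 3 := by norm_num
  · let w₁ : ColorSignature α := ⟨(a, {i, b}), by simp [hai, hab], insert_nonempty _ _⟩
    let w₂ : ColorSignature α := ⟨(b, {j, a}), by simp [hbj, Ne.symm hab], insert_nonempty _ _⟩
    have h₁ : (signatureGraph α).Adj ⟨(i, A), hiA, a, ha⟩ w₁ := by simp [w₁, ha]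
    have h₂ : (signatureGraph α).Adj w₁ w₂ := by simp [w₁, w₂]
    have h₃ : (signatureGraph α).Adj w₂ ⟨(j, B), hjB, b, hb⟩ := by simp [w₂, hb]
    calc _ ≤ (((h₁.toWalk.concat h₂).concat h₃).length : ℕ∞) := edist_le _
      _ = 3 := by simp

lemma connected [Nontrivial α] : (signatureGraph α).Connected :=
  ⟨fun u v => reachable_of_edist_ne_top (ne_top_of_le_ne_top (by simp) (edist_le_three u v))⟩

variable [Fintype α]

lemma ediam_eq_three (h : 2 < Fintype.card α) : (signatureGraph α).ediam = 3 := by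
  obtain ⟨a, b, c, hab, hac, hbc⟩ := Fintype.two_lt_card_iff.mp h
  let u : ColorSignature α := ⟨(a, {b}), by simpa using hab, singleton_nonempty b⟩
  let v : ColorSignature α := ⟨(a, {c}), by simpa using hac, singleton_nonempty c⟩
  have huv : 2 < (signatureGraph α).edist u v := by
    refine two_lt_edist_iff.mpr ⟨by simp [u, v, hbc], by simp [u, v, hac], ?_⟩
    refine Set.eq_empty_of_forall_notMem fun w hw => hbc ?_
    rw [mem_commonNeighbors] at hw
    exact (mem_singleton.mp hw.1.2).symm.trans (mem_singleton.mp hw.2.2)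
  refine le_antisymm (ediam_le_of_edist_le edist_le_three) ?_
  exact (Order.add_one_le_of_lt huv).trans edist_le_ediam

lemma diam_eq_three (h : 2 < Fintype.card α) : (signatureGraph α).diam = 3 := by
  rw [diam, ediam_eq_three h]
  rfl

lemma degree_eq (v : ColorSignature α) :
    (signatureGraph α).degree v = #v.1.2 * 2 ^ (Fintype.card α - 2) := by
  rw [← card_neighborFinset_eq_degree, neighborFinset_eq_filter, card_filter]
  simp only [adj_iff]
  rw [sum_eq fun j B => if v.1.1 ∈ B ∧ j ∈ v.1.2 then 1 else 0]
  have hA : {j ∈ v.1.2 | ¬v.1.1 = j} = v.1.2 := filter_true_of_mem fun j hj h => v.2.1 (h ▸ hj)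
  simp_rw [ite_and]
  simp [sum_ite, card_filter_mem_Ioc_empty_erase_univ, hA]

lemma card_edgeFinset (h : 3 ≤ Fintype.card α) : #(signatureGraph α).edgeFinset =
    Fintype.card α * (Fintype.card α - 1) * 2 ^ (2 * Fintype.card α - 5) := by
  have hsum := sum_degrees_eq_twice_card_edges (signatureGraph α)
  simp_rw [degree_eq, ← sum_mul, sum_card_snd] at hsum
  have hpow : 2 ^ (Fintype.card α - 2) * 2 ^ (Fintype.card α - 2) =
      2 * 2 ^ (2 * Fintype.card α - 5) := by
    rw [← pow_add, ← pow_succ']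
    congr 1
    omega
  rw [mul_assoc, hpow] at hsum
  linarith

variable [Nontrivial α]

lemma minDegree_eq : (signatureGraph α).minDegree = 2 ^ (Fintype.card α - 2) := by
  obtain ⟨a, b, hab⟩ := exists_pair_ne α
  refine le_antisymm ?_ (le_minDegree_of_forall_le_degree _ _ fun v => ?_)
  · simpa [degree_eq] using minDegree_le_degree (signatureGraph α)
      (⟨(a, {b}), by simpa using hab, singleton_nonempty b⟩ : ColorSignature α)
  · rw [degree_eq]
    exact Nat.le_mul_of_pos_left _ (card_pos.mpr v.2.2)

lemma maxDegree_eq :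
    (signatureGraph α).maxDegree = (Fintype.card α - 1) * 2 ^ (Fintype.card α - 2) := by
  obtain ⟨a, b, hab⟩ := exists_pair_ne α
  refine le_antisymm (maxDegree_le_of_forall_degree_le _ _ fun v => ?_) ?_
  · rw [degree_eq]
    gcongr
    simpa using card_le_card (mem_Ioc.mp (mem_Ioc_empty_erase_univ.mpr v.2)).2
  · simpa [degree_eq] using degree_le_maxDegree (signatureGraph α)
      (⟨(a, univ.erase a), notMem_erase a _, b, by simpa using hab.symm⟩ : ColorSignature α)

end

variable {k : ℕ}

lemma isNLColoring_fst : IsNLColoring (signatureGraph (Fin k)) fun v => v.1.1 := by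
  refine ⟨fun u v huv (h : u.1.1 = v.1.1) => v.2.1 (h ▸ huv.1), fun u v huv hcol himage => huv ?_⟩
  rw [image_fst_neighborSet, image_fst_neighborSet] at himage
  exact Subtype.ext (Prod.ext hcol (coe_injective himage))

lemma nlChromaticNumber_eq (hk : 2 ≤ k) : nlChromaticNumber (signatureGraph (Fin k)) = k := by
  refine le_antisymm (Nat.sInf_le ⟨_, isNLColoring_fst⟩) (le_csInf ⟨k, _, isNLColoring_fst⟩ ?_)
  rintro m ⟨c, hc⟩
  have hcard := hc.card_le exists_adj
  rw [ColorSignature.card_eq, Fintype.card_fin] at hcard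
  by_contra! hmk
  exact (mul_two_pow_sub_one_lt_mul_two_pow_sub_one hk hmk).not_ge hcard

end signatureGraph

/-- For every `k ≥ 3` there is a connected graph of order `k(2^(k-1) - 1)` with
`k(k-1)2^(2k-5)` edges, diameter 3, minimum degree `2^(k-2)`, maximum degree
`(k-1)2^(k-2)` and NL-chromatic number `k`. -/
theorem exists_extremal_graph_nlChromaticNumber (k : ℕ) (hk : 3 ≤ k) :
    ∃ G : SimpleGraph (Fin (k * (2 ^ (k - 1) - 1))),
      G.Connected ∧
      G.edgeSet.ncard = k * (k - 1) * 2 ^ (2 * k - 5) ∧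
      G.diam = 3 ∧
      (letI : DecidableRel G.Adj := Classical.decRel _;
        G.minDegree = 2 ^ (k - 2) ∧ G.maxDegree = (k - 1) * 2 ^ (k - 2)) ∧
      nlChromaticNumber G = k := by
  classical
  have : Nontrivial (Fin k) := Fin.nontrivial_iff_two_le.mpr (by omega)
  have hcard : Fintype.card (ColorSignature (Fin k)) = k * (2 ^ (k - 1) - 1) := by
    simp [ColorSignature.card_eq]
  let e := (signatureGraph (Fin k)).overFinIso hcard
  refine ⟨_, e.connected_iff.mp signatureGraph.connected, ?_, ?_, ?_, ?_⟩
  · rw [← coe_edgeFinset, Set.ncard_coe_finset, ← e.card_edgeFinset_eq,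
      signatureGraph.card_edgeFinset (by simpa using hk), Fintype.card_fin]
  · rw [← e.diam_eq, signatureGraph.diam_eq_three (by simp; omega)]
  · simp only [← e.minDegree_eq, ← e.maxDegree_eq, signatureGraph.minDegree_eq,
      signatureGraph.maxDegree_eq, Fintype.card_fin, and_self]
  · rw [← e.nlChromaticNumber_eq, signatureGraph.nlChromaticNumber_eq (by omega)]
end

section
/- If G is a twin-free finite simple graph of order n, then χ_NL(G) ≤ n − α(G) + 1, where α(G) is the independence number of G. -/
open SimpleGraph

/-- The independence number of a graph: the maximum size of a set of pairwise
non-adjacent vertices. -/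
noncomputable def indepNumber {V : Type*} (G : SimpleGraph V) : ℕ :=
  sSup {n : ℕ | ∃ S : Set V, (∀ u ∈ S, ∀ v ∈ S, ¬ G.Adj u v) ∧ S.ncard = n}

/-- If `G` is a twin-free graph of order `n`, then `χ_NL(G) ≤ n - α(G) + 1`. -/
theorem nlChromaticNumber_le_of_twin_free
    {V : Type*} [Fintype V] (G : SimpleGraph V)
    (htf : ∀ u v : V, u ≠ v →
      G.neighborSet u ≠ G.neighborSet v ∧
      insert u (G.neighborSet u) ≠ insert v (G.neighborSet v)) :
    nlChromaticNumber G ≤ Fintype.card V - indepNumber G + 1 := by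
  classical
  set α := indepNumber G with hα
  -- the set defining indepNumber is nonempty and bounded above
  have hne : {n : ℕ | ∃ S : Set V, (∀ u ∈ S, ∀ v ∈ S, ¬ G.Adj u v) ∧ S.ncard = n}.Nonempty :=
    ⟨0, ∅, by simp⟩
  have hbdd : BddAbove {n : ℕ | ∃ S : Set V, (∀ u ∈ S, ∀ v ∈ S, ¬ G.Adj u v) ∧ S.ncard = n} := by
    refine ⟨Fintype.card V, fun n hn => ?_⟩
    obtain ⟨S, -, hS⟩ := hn
    rw [← hS]
    calc S.ncard ≤ (Set.univ : Set V).ncard :=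
          Set.ncard_le_ncard (Set.subset_univ S) (Set.finite_univ)
      _ = Fintype.card V := by rw [Set.ncard_univ, Nat.card_eq_fintype_card]
  have hmem : α ∈ {n : ℕ | ∃ S : Set V, (∀ u ∈ S, ∀ v ∈ S, ¬ G.Adj u v) ∧ S.ncard = n} := by
    rw [hα, indepNumber]
    exact Nat.sSup_mem hne hbdd
  obtain ⟨S, hSind, hScard⟩ := hmem
  -- cardinality of the complement
  have hcompl : Fintype.card ↥(Sᶜ : Set V) = Fintype.card V - α := by
    rw [Fintype.card_compl_set, ← hScard, Set.ncard_eq_toFinset_card', Set.toFinset_card]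
  -- an equiv from the complement to Fin (n - α)
  let e : ↥(Sᶜ : Set V) ≃ Fin (Fintype.card V - α) :=
    Fintype.equivFinOfCardEq hcompl
  -- the coloring
  let c : V → Fin (Fintype.card V - α + 1) := fun v =>
    if h : v ∈ S then 0 else Fin.succ (e ⟨v, h⟩)
  have hc0 : ∀ v ∈ S, c v = 0 := fun v hv => dif_pos hv
  have hcs : ∀ v (h : v ∉ S), c v = Fin.succ (e ⟨v, h⟩) := fun v h => dif_neg h
  -- c is injective on the complement of S
  have hinj : ∀ a b : V, a ∉ S → b ∉ S → c a = c b → a = b := by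
    intro a b ha hb hab
    rw [hcs a ha, hcs b hb] at hab
    have := e.injective (Fin.succ_injective _ hab)
    exact congrArg Subtype.val this
  -- same-colored distinct vertices are both in S
  have hboth : ∀ a b : V, a ≠ b → c a = c b → a ∈ S ∧ b ∈ S := by
    intro a b hne hab
    by_cases ha : a ∈ S <;> by_cases hb : b ∈ S
    · exact ⟨ha, hb⟩
    · exfalso; rw [hc0 a ha, hcs b hb] at hab
      exact (Fin.succ_ne_zero _) hab.symm
    · exfalso; rw [hcs a ha, hc0 b hb] at hab
      exact (Fin.succ_ne_zero _) hab
    · exact absurd (hinj a b ha hb hab) hne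
  have hNL : IsNLColoring G c := by
    constructor
    · intro u v huv hcc
      obtain ⟨hu, hv⟩ := hboth u v (G.ne_of_adj huv) hcc
      exact hSind u hu v hv huv
    · intro u v huv hcc heq
      obtain ⟨hu, hv⟩ := hboth u v huv hcc
      apply (htf u v huv).1
      -- neighbors of vertices in S are not in S
      have hnot : ∀ x ∈ S, ∀ w, G.Adj x w → w ∉ S := by
        intro x hx w hadj hw
        exact hSind x hx w hw hadj
      apply Set.eq_of_subset_of_subset
      · intro w hw
        have hw' : w ∉ S := hnot u hu w hw
        have : c w ∈ c '' G.neighborSet v := heq ▸ ⟨w, hw, rfl⟩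
        obtain ⟨w', hw'v, hcw⟩ := this
        have hw'' : w' ∉ S := hnot v hv w' hw'v
        rwa [hinj w' w hw'' hw' hcw] at hw'v
      · intro w hw
        have hw' : w ∉ S := hnot v hv w hw
        have : c w ∈ c '' G.neighborSet u := heq ▸ ⟨w, hw, rfl⟩
        obtain ⟨w', hw'u, hcw⟩ := this
        have hw'' : w' ∉ S := hnot u hu w' hw'u
        rwa [hinj w' w hw'' hw' hcw] at hw'u
  exact Nat.sInf_le ⟨c, hNL⟩
end

section
/- Let G be a finite simple graph of order n ≥ 3. Then χ_NL(G) = n if and only if G is a complete multipartite graph or G is the edgeless graph on n vertices. -/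
open SimpleGraph

/-- A graph is complete multipartite iff it has at least one edge and any two distinct
non-adjacent vertices have identical open neighborhoods. -/
def IsCompleteMultipartiteGraph {V : Type*} (G : SimpleGraph V) : Prop :=
  (∃ u v : V, G.Adj u v) ∧
  ∀ u v : V, u ≠ v → ¬ G.Adj u v → G.neighborSet u = G.neighborSet v

/-- Auxiliary: if `u ≠ v` are non-adjacent and `w` is a neighbor of `u` but not of `v`,
then identifying the colors of `u` and `v` gives an NL-coloring with one fewer color. -/
lemma exists_nl_coloring_card_sub_one {V : Type*} [Fintype V] (G : SimpleGraph V)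
    {u v w : V} (huv : u ≠ v) (hnadj : ¬ G.Adj u v)
    (hw : G.Adj u w) (hwv : ¬ G.Adj v w) :
    ∃ c : V → Fin (Fintype.card V - 1), IsNLColoring G c := by
  classical
  have hcard : Fintype.card {x : V // x ≠ v} = Fintype.card V - 1 := by
    simp [Fintype.card_subtype_compl (fun x : V => x = v), Fintype.card_subtype_eq v]
  let g : {x : V // x ≠ v} ≃ Fin (Fintype.card V - 1) := Fintype.equivFinOfCardEq hcard
  let c : V → Fin (Fintype.card V - 1) :=
    fun x => if hx : x = v then g ⟨u, huv⟩ else g ⟨x, hx⟩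
  have hc : ∀ a b : V, c a = c b → a = b ∨ (a = u ∧ b = v) ∨ (a = v ∧ b = u) := by
    intro a b hab
    simp only [c] at hab
    split_ifs at hab with ha hb hb
    · left; rw [ha, hb]
    · have h' : u = b := Subtype.ext_iff.mp (g.injective hab)
      right; right; exact ⟨ha, h'.symm⟩
    · have h' : a = u := Subtype.ext_iff.mp (g.injective hab)
      right; left; exact ⟨h', hb⟩
    · left; exact Subtype.ext_iff.mp (g.injective hab)
  refine ⟨c, ?_, ?_⟩
  · intro a b hadj hcab
    rcases hc a b hcab with rfl | ⟨rfl, rfl⟩ | ⟨rfl, rfl⟩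
    · exact G.irrefl hadj
    · exact hnadj hadj
    · exact hnadj hadj.symm
  · intro a b hab hcab
    have key : c '' G.neighborSet u ≠ c '' G.neighborSet v := by
      intro heq
      have hmem : c w ∈ c '' G.neighborSet u := ⟨w, hw, rfl⟩
      rw [heq] at hmem
      obtain ⟨w', hw', hcw⟩ := hmem
      rcases hc w' w hcw with rfl | ⟨rfl, rfl⟩ | ⟨rfl, rfl⟩
      · exact hwv hw'
      · exact hnadj hw
      · exact G.irrefl hw
    rcases hc a b hcab with rfl | ⟨rfl, rfl⟩ | ⟨rfl, rfl⟩
    · exact absurd rfl hab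
    · exact key
    · exact fun h => key h.symm

/-- For a graph of order `n ≥ 3`, `χ_NL(G) = n` iff `G` is complete multipartite or
edgeless. -/
theorem nlChromaticNumber_eq_card_iff
    {V : Type*} [Fintype V] (G : SimpleGraph V) (hn : 3 ≤ Fintype.card V) :
    nlChromaticNumber G = Fintype.card V ↔
      IsCompleteMultipartiteGraph G ∨ G = ⊥ := by
  constructor
  · intro h
    by_contra hcon
    push_neg at hcon
    obtain ⟨hnotcm, hbot⟩ := hcon
    have hedge : ∃ a b : V, G.Adj a b := by
      by_contra he
      push_neg at he
      apply hbot
      ext a b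
      simp only [bot_adj, iff_false]
      exact he a b
    rw [IsCompleteMultipartiteGraph] at hnotcm
    push_neg at hnotcm
    obtain ⟨u, v, huv, hnadj, hN⟩ := hnotcm hedge
    have hex : ∃ w, (G.Adj u w ∧ ¬ G.Adj v w) ∨ (G.Adj v w ∧ ¬ G.Adj u w) := by
      by_contra hno
      push_neg at hno
      apply hN
      ext w
      simp only [mem_neighborSet]
      have := hno w
      tauto
    obtain ⟨w, hcase | hcase⟩ := hex
    · obtain ⟨c, hc⟩ := exists_nl_coloring_card_sub_one G huv hnadj hcase.1 hcase.2
      have hle : nlChromaticNumber G ≤ Fintype.card V - 1 := Nat.sInf_le ⟨c, hc⟩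
      omega
    · obtain ⟨c, hc⟩ := exists_nl_coloring_card_sub_one G huv.symm
        (fun h => hnadj h.symm) hcase.1 hcase.2
      have hle : nlChromaticNumber G ≤ Fintype.card V - 1 := Nat.sInf_le ⟨c, hc⟩
      omega
  · intro h
    have hmem : Fintype.card V ∈ {k : ℕ | ∃ c : V → Fin k, IsNLColoring G c} := by
      refine ⟨Fintype.equivFin V, ?_, ?_⟩
      · intro a b hadj hc
        exact hadj.ne ((Fintype.equivFin V).injective hc)
      · intro a b hab hc
        exact absurd ((Fintype.equivFin V).injective hc) hab
    refine le_antisymm (Nat.sInf_le hmem) (le_csInf ⟨_, hmem⟩ ?_)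
    rintro k ⟨c, hproper, hnl⟩
    by_contra hk
    push_neg at hk
    have hlt : Fintype.card (Fin k) < Fintype.card V := by simpa using hk
    obtain ⟨a, b, hab, hcab⟩ := Fintype.exists_ne_map_eq_of_card_lt c hlt
    have hnadj : ¬ G.Adj a b := fun had => hproper a b had hcab
    have hNab : G.neighborSet a = G.neighborSet b := by
      rcases h with hcm | rfl
      · exact hcm.2 a b hab hnadj
      · ext x; simp [neighborSet]
    exact hnl a b hab hcab (by rw [hNab])
end

section
/- Let G be a finite simple graph of order n ≥ 5, and let u₁, u₂, u₃, v be four distinct vertices such that u₂ is adjacent to both u₁ and u₃, u₁ and u₃ are not adjacent, N(u₁) ≠ N(u₃), and v is adjacent to none of u₁, u₂, u₃ (so {u₁, u₂, u₃, v} induces a subgraph isomorphic to P₃ + K₁). Then χ_NL(G) ≤ n − 2. -/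
open SimpleGraph

/-- If a graph of order `n ≥ 5` contains vertices `u₁, u₂, u₃, v` inducing `P₃ + K₁`,
with `u₂` the center of the path and `N(u₁) ≠ N(u₃)`, then `χ_NL(G) ≤ n - 2`. -/
theorem nlChromaticNumber_le_card_sub_two_of_induced_pathThree_add_K1
    {V : Type*} [Fintype V] (G : SimpleGraph V) (hn : 5 ≤ Fintype.card V)
    (u₁ u₂ u₃ v : V)
    (hdist : u₁ ≠ u₂ ∧ u₁ ≠ u₃ ∧ u₁ ≠ v ∧ u₂ ≠ u₃ ∧ u₂ ≠ v ∧ u₃ ≠ v)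
    (h12 : G.Adj u₁ u₂) (h23 : G.Adj u₂ u₃) (h13 : ¬ G.Adj u₁ u₃)
    (hN : G.neighborSet u₁ ≠ G.neighborSet u₃)
    (hv : ¬ G.Adj v u₁ ∧ ¬ G.Adj v u₂ ∧ ¬ G.Adj v u₃) :
    nlChromaticNumber G ≤ Fintype.card V - 2 := by
  classical
  obtain ⟨h12', h13', h1v, h23', h2v, h3v⟩ := hdist
  let f : V → V := fun x => if x = u₃ then u₁ else if x = v then u₂ else x
  have hfmem : ∀ x, f x ≠ u₃ ∧ f x ≠ v := by
    intro x
    simp only [f]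
    split_ifs with h1 h2
    · exact ⟨h13', h1v⟩
    · exact ⟨h23', h2v⟩
    · exact ⟨h1, h2⟩
  have hf : ∀ x y, f x = f y →
      x = y ∨ (x = u₁ ∧ y = u₃) ∨ (x = u₃ ∧ y = u₁) ∨ (x = u₂ ∧ y = v) ∨ (x = v ∧ y = u₂) := by
    intro x y
    simp only [f]
    split_ifs with h1 h2 h3 h4 h5 <;> intro h <;> simp_all <;> tauto
  have hS : Fintype.card {x // x ∈ (Finset.univ \ {u₃, v} : Finset V)} = Fintype.card V - 2 := by
    rw [Fintype.card_coe, Finset.card_sdiff_of_subset (Finset.subset_univ _), Finset.card_univ,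
      Finset.card_pair h3v]
  let e := Fintype.equivFinOfCardEq hS
  let c : V → Fin (Fintype.card V - 2) := fun x =>
    e ⟨f x, Finset.mem_sdiff.mpr ⟨Finset.mem_univ _, by
      simp [(hfmem x).1, (hfmem x).2]⟩⟩
  have hc : ∀ x y, c x = c y ↔ f x = f y := by
    intro x y
    constructor
    · intro h
      exact congrArg Subtype.val (e.injective h)
    · intro h
      simp only [c]
      congr 1
      exact Subtype.ext h
  have hA : c '' (G.neighborSet u₂) ≠ c '' (G.neighborSet v) := by
    intro heq
    have hmem : c u₁ ∈ c '' (G.neighborSet u₂) := ⟨u₁, h12.symm, rfl⟩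
    rw [heq] at hmem
    obtain ⟨w, hw, hcw⟩ := hmem
    rcases hf w u₁ ((hc w u₁).mp hcw) with h | ⟨h, _⟩ | ⟨h, _⟩ | ⟨_, h⟩ | ⟨_, h⟩
    · subst h; exact hv.1 hw
    · subst h; exact hv.1 hw
    · subst h; exact hv.2.2 hw
    · exact h1v h
    · exact h12' h
  have hB₁ : ∀ w, G.Adj u₁ w → ¬ G.Adj u₃ w → c w ∉ c '' (G.neighborSet u₃) := by
    rintro w h1w h3w ⟨z, hz, hcz⟩
    rcases hf z w ((hc z w).mp hcz) with h | ⟨hz1, hw3⟩ | ⟨hz3, hw1⟩ | ⟨hz2, hwv⟩ | ⟨hzv, hw2⟩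
    · subst h; exact h3w hz
    · subst hw3; exact h13 h1w
    · subst hw1; exact G.irrefl h1w
    · subst hwv; exact hv.1 h1w.symm
    · subst hzv; exact hv.2.2 hz.symm
  have hB₃ : ∀ w, G.Adj u₃ w → ¬ G.Adj u₁ w → c w ∉ c '' (G.neighborSet u₁) := by
    rintro w h3w h1w ⟨z, hz, hcz⟩
    rcases hf z w ((hc z w).mp hcz) with h | ⟨hz1, hw3⟩ | ⟨hz3, hw1⟩ | ⟨hz2, hwv⟩ | ⟨hzv, hw2⟩
    · subst h; exact h1w hz
    · subst hw3; exact G.irrefl h3w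
    · subst hw1; exact h13 h3w.symm
    · subst hwv; exact hv.2.2 h3w.symm
    · subst hzv; exact hv.1 hz.symm
  have hB : c '' (G.neighborSet u₁) ≠ c '' (G.neighborSet u₃) := by
    intro heq
    apply hN
    ext w
    constructor
    · intro hw
      by_contra hw3
      exact hB₁ w hw hw3 (heq ▸ ⟨w, hw, rfl⟩)
    · intro hw
      by_contra hw1
      exact hB₃ w hw hw1 (heq ▸ ⟨w, hw, rfl⟩)
  apply Nat.sInf_le
  refine ⟨c, ?_, ?_⟩
  · intro x y hadj hcxy
    rcases hf x y ((hc x y).mp hcxy) with h | ⟨hx, hy⟩ | ⟨hx, hy⟩ | ⟨hx, hy⟩ | ⟨hx, hy⟩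
    · subst h; exact G.irrefl hadj
    · subst hx; subst hy; exact h13 hadj
    · subst hx; subst hy; exact h13 hadj.symm
    · subst hx; subst hy; exact hv.2.1 hadj.symm
    · subst hx; subst hy; exact hv.2.1 hadj
  · intro x y hxy hcxy
    rcases hf x y ((hc x y).mp hcxy) with h | ⟨hx, hy⟩ | ⟨hx, hy⟩ | ⟨hx, hy⟩ | ⟨hx, hy⟩
    · exact absurd h hxy
    · subst hx; subst hy; exact hB
    · subst hx; subst hy; exact hB.symm
    · subst hx; subst hy; exact hA
    · subst hx; subst hy; exact hA.symm
end

section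
/- Let G be a finite simple graph of order n ≥ 5 with diameter 3 and with no induced subgraph isomorphic to 2K₂. If χ_NL(G) = n − 1, then χ_L(G) = n − 1. -/
open SimpleGraph

section Aux

variable {V : Type*} {G : SimpleGraph V}

lemma distToSet_exists (G : SimpleGraph V) (v : V) {S : Set V} (hS : S.Nonempty) :
    ∃ w ∈ S, G.dist v w = distToSet G v S := by
  obtain ⟨w, hw, hd⟩ := Nat.sInf_mem (hS.image (G.dist v))
  exact ⟨w, hw, hd⟩

lemma distToSet_le (G : SimpleGraph V) (v : V) {S : Set V} {w : V} (hw : w ∈ S) :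
    distToSet G v S ≤ G.dist v w := Nat.sInf_le ⟨w, hw, rfl⟩

lemma distToSet_eq_zero_iff (hc : G.Connected) (v : V) {S : Set V} (hS : S.Nonempty) :
    distToSet G v S = 0 ↔ v ∈ S := by
  constructor
  · intro h
    obtain ⟨w, hw, hd⟩ := distToSet_exists G v hS
    rw [h] at hd
    rwa [(hc.dist_eq_zero_iff).mp hd]
  · intro h
    have := distToSet_le G v h
    rwa [SimpleGraph.dist_self, Nat.le_zero] at this

lemma distToSet_eq_one_iff (hc : G.Connected) {k : ℕ} {c : V → Fin k}
    (hp : ∀ u v : V, G.Adj u v → c u ≠ c v) (v : V) (j : Fin k)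
    (hS : (c ⁻¹' {j}).Nonempty) :
    distToSet G v (c ⁻¹' {j}) = 1 ↔ j ∈ c '' (G.neighborSet v) := by
  constructor
  · intro h
    obtain ⟨w, hw, hd⟩ := distToSet_exists G v hS
    rw [h] at hd
    have hadj : G.Adj v w := SimpleGraph.dist_eq_one_iff_adj.mp hd
    exact ⟨w, hadj, hw⟩
  · rintro ⟨x, hx, hcx⟩
    have hx' : G.Adj v x := hx
    have hle : distToSet G v (c ⁻¹' {j}) ≤ 1 := by
      have := distToSet_le G v (show x ∈ c ⁻¹' {j} from hcx)
      rwa [SimpleGraph.dist_eq_one_iff_adj.mpr hx'] at this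
    have hne : distToSet G v (c ⁻¹' {j}) ≠ 0 := by
      intro h0
      have hvj : v ∈ c ⁻¹' {j} := (distToSet_eq_zero_iff hc v hS).mp h0
      exact hp v x hx' (by rw [Set.mem_preimage, Set.mem_singleton_iff] at hvj; rw [hvj, hcx])
    omega

lemma adj_mid_of_length_two {u w : V} (p : G.Walk u w) (hp : p.length = 2) :
    ∃ x, G.Adj u x ∧ G.Adj x w := by
  cases p with
  | nil => simp at hp
  | cons h q =>
    cases q with
    | nil => simp at hp
    | cons h' q' =>
      cases q' with
      | nil => exact ⟨_, h, h'⟩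
      | cons h'' q'' => simp [SimpleGraph.Walk.length_cons] at hp

lemma claim23 (hc : G.Connected)
    (h2k2 : ¬ ∃ a b c d : V, a ≠ b ∧ a ≠ c ∧ a ≠ d ∧ b ≠ c ∧ b ≠ d ∧ c ≠ d ∧
      G.Adj a b ∧ G.Adj c d ∧ ¬ G.Adj a c ∧ ¬ G.Adj a d ∧ ¬ G.Adj b c ∧ ¬ G.Adj b d)
    {k : ℕ} {c : V → Fin k} (hp : ∀ a b : V, G.Adj a b → c a ≠ c b) {u v : V}
    (hsets : c '' (G.neighborSet u) = c '' (G.neighborSet v)) {j : Fin k}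
    (hDu : distToSet G u (c ⁻¹' {j}) = 2) (hDv : distToSet G v (c ⁻¹' {j}) = 3) : False := by
  have hSne : (c ⁻¹' {j}).Nonempty := by
    by_contra hS
    rw [Set.not_nonempty_iff_eq_empty] at hS
    rw [distToSet, hS, Set.image_empty, Nat.sInf_empty] at hDu
    omega
  obtain ⟨wu, hwu, hdwu⟩ := distToSet_exists G u hSne
  rw [hDu] at hdwu
  have hge : ∀ w, w ∈ c ⁻¹' {j} → 3 ≤ G.dist v w := by
    intro w hw
    have := distToSet_le G v hw
    omega
  have h3 : 3 ≤ G.dist v wu := hge wu hwu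
  obtain ⟨p, hplen⟩ := (hc.preconnected u wu).exists_walk_length_eq_dist
  obtain ⟨x, h1, h2⟩ := adj_mid_of_length_two p (by rw [hplen, hdwu])
  have hxmem : c x ∈ c '' (G.neighborSet v) := hsets ▸ ⟨x, h1, rfl⟩
  obtain ⟨y, hy, hcy⟩ := hxmem
  have hy' : G.Adj v y := hy
  have hnadj : ∀ z, G.Adj v z → G.Adj z wu → False := by
    intro z hvz hzwu
    have ht : G.dist v wu ≤ G.dist v z + G.dist z wu := hc.dist_triangle
    rw [SimpleGraph.dist_eq_one_iff_adj.mpr hvz, SimpleGraph.dist_eq_one_iff_adj.mpr hzwu] at ht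
    omega
  by_cases hyx : y = x
  · exact hnadj x (hyx ▸ hy') h2
  by_cases hadjyx : G.Adj y x
  · exact hp y x hadjyx hcy
  apply h2k2
  have hnvwu : ¬ G.Adj v wu := by
    intro h
    have := SimpleGraph.dist_eq_one_iff_adj.mpr h
    omega
  have hnvx : ¬ G.Adj v x := fun h => hnadj x h h2
  have hnywu : ¬ G.Adj y wu := fun h => hnadj y hy' h
  refine ⟨v, y, wu, x, hy'.ne, ?_, ?_, ?_, hyx, h2.ne', hy', h2.symm, hnvwu, hnvx, hnywu, hadjyx⟩
  · intro h; rw [h, SimpleGraph.dist_self] at h3; omega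
  · intro hvx; rw [← hvx] at h2; exact hnvwu h2
  · intro h; exact hnvwu (h ▸ hy')

lemma NLtoML (hc : G.Connected) {k : ℕ} {c : V → Fin k}
    (h : IsNLColoring G c) : IsMLColoring G c := by
  have aux : ∀ u v : V, c u = c v → ∀ j : Fin k, j ∈ c '' (G.neighborSet u) →
      j ∉ c '' (G.neighborSet v) →
      distToSet G u (c ⁻¹' {j}) ≠ distToSet G v (c ⁻¹' {j}) := by
    intro u v hcc j hju hjv
    obtain ⟨x, hx, hcx⟩ := hju
    have hSne : (c ⁻¹' {j}).Nonempty := ⟨x, hcx⟩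
    have h1 : distToSet G u (c ⁻¹' {j}) = 1 :=
      (distToSet_eq_one_iff hc h.1 u j hSne).mpr ⟨x, hx, hcx⟩
    intro heq
    rw [h1] at heq
    exact hjv ((distToSet_eq_one_iff hc h.1 v j hSne).mp heq.symm)
  refine ⟨h.1, fun u v huv hcc => ?_⟩
  have hne := h.2 u v huv hcc
  have : (¬ c '' (G.neighborSet u) ⊆ c '' (G.neighborSet v)) ∨
      (¬ c '' (G.neighborSet v) ⊆ c '' (G.neighborSet u)) := by
    by_contra hcon
    push_neg at hcon
    exact hne (hcon.1.antisymm hcon.2)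
  rcases this with hns | hns
  · obtain ⟨j, hju, hjv⟩ := Set.not_subset.mp hns
    exact ⟨j, aux u v hcc j hju hjv⟩
  · obtain ⟨j, hjv, hju⟩ := Set.not_subset.mp hns
    exact ⟨j, (aux v u hcc.symm j hjv hju).symm⟩

lemma MLtoNL (hc : G.Connected) (hdle : ∀ a b : V, G.dist a b ≤ 3)
    (h2k2 : ¬ ∃ a b c d : V, a ≠ b ∧ a ≠ c ∧ a ≠ d ∧ b ≠ c ∧ b ≠ d ∧ c ≠ d ∧
      G.Adj a b ∧ G.Adj c d ∧ ¬ G.Adj a c ∧ ¬ G.Adj a d ∧ ¬ G.Adj b c ∧ ¬ G.Adj b d)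
    {k : ℕ} {c : V → Fin k} (h : IsMLColoring G c) : IsNLColoring G c := by
  refine ⟨h.1, fun u v huv hcc hsets => ?_⟩
  obtain ⟨j, hj⟩ := h.2 u v huv hcc
  have hSne : (c ⁻¹' {j}).Nonempty := by
    by_contra hS
    rw [Set.not_nonempty_iff_eq_empty] at hS
    exact hj (by simp [distToSet, hS])
  obtain ⟨wu, hwu, hdwu⟩ := distToSet_exists G u hSne
  obtain ⟨wv, hwv, hdwv⟩ := distToSet_exists G v hSne
  have hu3 : distToSet G u (c ⁻¹' {j}) ≤ 3 := hdwu ▸ hdle u wu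
  have hv3 : distToSet G v (c ⁻¹' {j}) ≤ 3 := hdwv ▸ hdle v wv
  have h0 : distToSet G u (c ⁻¹' {j}) = 0 ↔ distToSet G v (c ⁻¹' {j}) = 0 := by
    rw [distToSet_eq_zero_iff hc u hSne, distToSet_eq_zero_iff hc v hSne,
      Set.mem_preimage, Set.mem_preimage, Set.mem_singleton_iff, Set.mem_singleton_iff, hcc]
  have h1 : distToSet G u (c ⁻¹' {j}) = 1 ↔ distToSet G v (c ⁻¹' {j}) = 1 := by
    rw [distToSet_eq_one_iff hc h.1 u j hSne, distToSet_eq_one_iff hc h.1 v j hSne, hsets]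
  have hcases : (distToSet G u (c ⁻¹' {j}) = 2 ∧ distToSet G v (c ⁻¹' {j}) = 3) ∨
      (distToSet G u (c ⁻¹' {j}) = 3 ∧ distToSet G v (c ⁻¹' {j}) = 2) := by omega
  rcases hcases with ⟨hDu, hDv⟩ | ⟨hDu, hDv⟩
  · exact claim23 hc h2k2 h.1 hsets hDu hDv
  · exact claim23 hc h2k2 h.1 hsets.symm hDv hDu

end Aux

/-- If `G` has order `n ≥ 5`, diameter 3, no induced `2K₂` and `χ_NL(G) = n - 1`,
then `χ_L(G) = n - 1`. -/
theorem mlChromaticNumber_eq_card_sub_one_of_diam_three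
    {V : Type*} [Fintype V] (G : SimpleGraph V) (hn : 5 ≤ Fintype.card V)
    (hd : G.diam = 3)
    (h2k2 : ¬ ∃ a b c d : V, a ≠ b ∧ a ≠ c ∧ a ≠ d ∧ b ≠ c ∧ b ≠ d ∧ c ≠ d ∧
      G.Adj a b ∧ G.Adj c d ∧ ¬ G.Adj a c ∧ ¬ G.Adj a d ∧ ¬ G.Adj b c ∧ ¬ G.Adj b d)
    (hnl : nlChromaticNumber G = Fintype.card V - 1) :
    mlChromaticNumber G = Fintype.card V - 1 := by
  have hd0 : G.diam ≠ 0 := by rw [hd]; omega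
  have hnt : Nontrivial V := SimpleGraph.nontrivial_of_diam_ne_zero hd0
  have hetop : G.ediam ≠ ⊤ := SimpleGraph.ediam_ne_top_of_diam_ne_zero hd0
  have hpre : G.Preconnected := by
    by_contra hp
    exact hetop (SimpleGraph.ediam_eq_top_of_not_preconnected hp)
  have hc : G.Connected := (SimpleGraph.connected_iff G).mpr ⟨hpre, inferInstance⟩
  have hdle : ∀ a b : V, G.dist a b ≤ 3 := fun a b => hd ▸ SimpleGraph.dist_le_diam hetop
  have hsetseq : {k : ℕ | ∃ c : V → Fin k, IsMLColoring G c} =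
      {k : ℕ | ∃ c : V → Fin k, IsNLColoring G c} := by
    ext k
    exact ⟨fun ⟨c, hcm⟩ => ⟨c, MLtoNL hc hdle h2k2 hcm⟩, fun ⟨c, hcn⟩ => ⟨c, NLtoML hc hcn⟩⟩
  rw [mlChromaticNumber, hsetseq]
  exact hnl
end

section
/- Let G and H be finite simple graphs with χ_NL(G) = k and χ_NL(H) = h. If G has exactly k isolated vertices and H has exactly h isolated vertices, then χ_NL(G + H) = k + h, where G + H denotes the disjoint union of G and H. -/
open SimpleGraph

lemma nl_set_nonempty {V : Type*} [Fintype V] (G : SimpleGraph V) :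
    {k : ℕ | ∃ c : V → Fin k, IsNLColoring G c}.Nonempty := by
  refine ⟨Fintype.card V, (Fintype.equivFin V : V → Fin (Fintype.card V)), ?_, ?_⟩
  · intro u v hadj hc
    exact G.ne_of_adj hadj ((Fintype.equivFin V).injective hc)
  · intro u v huv hc
    exact absurd ((Fintype.equivFin V).injective hc) huv

lemma nl_exists {V : Type*} [Fintype V] (G : SimpleGraph V) {k : ℕ}
    (hk : nlChromaticNumber G = k) : ∃ c : V → Fin k, IsNLColoring G c := by
  subst hk
  exact Nat.sInf_mem (nl_set_nonempty G)

lemma nl_lower {V : Type*} {n : ℕ} (G : SimpleGraph V) (c : V → Fin n)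
    (hc : IsNLColoring G c) : {v : V | G.neighborSet v = ∅}.ncard ≤ n := by
  have hinj : Set.InjOn c {v : V | G.neighborSet v = ∅} := by
    intro u hu v hv hcv
    by_contra huv
    apply hc.2 u v huv hcv
    simp only [Set.mem_setOf_eq] at hu hv
    rw [hu, hv]
  calc {v : V | G.neighborSet v = ∅}.ncard
      = (c '' {v : V | G.neighborSet v = ∅}).ncard := (Set.ncard_image_of_injOn hinj).symm
    _ ≤ (Set.univ : Set (Fin n)).ncard := Set.ncard_le_ncard (Set.subset_univ _) (Set.toFinite _)
    _ = n := by simp [Set.ncard_univ]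

lemma sum_neighborSet_inl {α β : Type*} (G : SimpleGraph α) (H : SimpleGraph β) (u : α) :
    (G ⊕g H).neighborSet (Sum.inl u) = Sum.inl '' G.neighborSet u := by
  ext w
  cases w with
  | inl w => simp [SimpleGraph.neighborSet]
  | inr w => simp [SimpleGraph.neighborSet]

lemma sum_neighborSet_inr {α β : Type*} (G : SimpleGraph α) (H : SimpleGraph β) (u : β) :
    (G ⊕g H).neighborSet (Sum.inr u) = Sum.inr '' H.neighborSet u := by
  ext w
  cases w with
  | inl w => simp [SimpleGraph.neighborSet]
  | inr w => simp [SimpleGraph.neighborSet]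

/-- If `χ_NL(G) = k`, `χ_NL(H) = h`, `G` has exactly `k` isolated vertices and `H` has
exactly `h` isolated vertices, then `χ_NL(G + H) = k + h`. -/
theorem nlChromaticNumber_sum_of_isolated
    {α β : Type*} [Fintype α] [Fintype β] (G : SimpleGraph α) (H : SimpleGraph β)
    (k h : ℕ) (hG : nlChromaticNumber G = k) (hH : nlChromaticNumber H = h)
    (hGiso : {v : α | G.neighborSet v = ∅}.ncard = k)
    (hHiso : {v : β | H.neighborSet v = ∅}.ncard = h) :
    nlChromaticNumber (G ⊕g H) = k + h := by
  obtain ⟨c, hc⟩ := nl_exists G hG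
  obtain ⟨d, hd⟩ := nl_exists H hH
  -- the combined coloring
  set e : α ⊕ β → Fin (k + h) := Sum.elim (fun u => Fin.castAdd h (c u))
    (fun u => Fin.natAdd k (d u)) with he
  have hcastinj : Function.Injective (Fin.castAdd h : Fin k → Fin (k + h)) :=
    fun a b hab => Fin.ext (by simpa using congrArg Fin.val hab)
  have hnatinj : Function.Injective (Fin.natAdd k : Fin h → Fin (k + h)) :=
    fun a b hab => Fin.ext (by
      have := congrArg Fin.val hab
      simp only [Fin.coe_natAdd] at this
      omega)
  have hne : ∀ (a : Fin k) (b : Fin h), Fin.castAdd h a ≠ Fin.natAdd k b := by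
    intro a b hab
    have := congrArg Fin.val hab
    simp only [Fin.coe_castAdd, Fin.coe_natAdd] at this
    omega
  have hE : IsNLColoring (G ⊕g H) e := by
    constructor
    · rintro (u | u) (v | v) hadj heq
      · exact hc.1 u v (by simpa using hadj) (hcastinj heq)
      · exact hne _ _ heq
      · exact hne _ _ heq.symm
      · exact hd.1 u v (by simpa using hadj) (hnatinj heq)
    · rintro (u | u) (v | v) huv heq
      · have huv' : u ≠ v := fun h' => huv (by rw [h'])
        have hcc : c u = c v := hcastinj heq
        intro him
        apply hc.2 u v huv' hcc
        have : Fin.castAdd h '' (c '' G.neighborSet u)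
            = Fin.castAdd h '' (c '' G.neighborSet v) := by
          calc Fin.castAdd h '' (c '' G.neighborSet u)
              = e '' ((G ⊕g H).neighborSet (Sum.inl u)) := by
                rw [sum_neighborSet_inl, ← Set.image_comp, ← Set.image_comp]; rfl
            _ = e '' ((G ⊕g H).neighborSet (Sum.inl v)) := him
            _ = Fin.castAdd h '' (c '' G.neighborSet v) := by
                rw [sum_neighborSet_inl, ← Set.image_comp, ← Set.image_comp]; rfl
        exact (Set.image_eq_image hcastinj).mp this
      · exact absurd heq (hne _ _)
      · exact absurd heq.symm (hne _ _)
      · have huv' : u ≠ v := fun h' => huv (by rw [h'])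
        have hcc : d u = d v := hnatinj heq
        intro him
        apply hd.2 u v huv' hcc
        have : Fin.natAdd k '' (d '' H.neighborSet u)
            = Fin.natAdd k '' (d '' H.neighborSet v) := by
          calc Fin.natAdd k '' (d '' H.neighborSet u)
              = e '' ((G ⊕g H).neighborSet (Sum.inr u)) := by
                rw [sum_neighborSet_inr, ← Set.image_comp, ← Set.image_comp]; rfl
            _ = e '' ((G ⊕g H).neighborSet (Sum.inr v)) := him
            _ = Fin.natAdd k '' (d '' H.neighborSet v) := by
                rw [sum_neighborSet_inr, ← Set.image_comp, ← Set.image_comp]; rfl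
        exact (Set.image_eq_image hnatinj).mp this
  have hmem : k + h ∈ {n : ℕ | ∃ c : α ⊕ β → Fin n, IsNLColoring (G ⊕g H) c} := ⟨e, hE⟩
  -- isolated vertices of the sum
  have hisoset : {v : α ⊕ β | (G ⊕g H).neighborSet v = ∅}
      = Sum.inl '' {v : α | G.neighborSet v = ∅} ∪ Sum.inr '' {v : β | H.neighborSet v = ∅} := by
    ext w
    cases w with
    | inl w =>
      simp only [Set.mem_setOf_eq, Set.mem_union, Set.mem_image, sum_neighborSet_inl,
        Set.image_eq_empty]
      constructor
      · intro hw; exact Or.inl ⟨w, hw, rfl⟩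
      · rintro (⟨x, hx, hxw⟩ | ⟨x, hx, hxw⟩)
        · cases Sum.inl.inj hxw; exact hx
        · exact absurd hxw (by simp)
    | inr w =>
      simp only [Set.mem_setOf_eq, Set.mem_union, Set.mem_image, sum_neighborSet_inr,
        Set.image_eq_empty]
      constructor
      · intro hw; exact Or.inr ⟨w, hw, rfl⟩
      · rintro (⟨x, hx, hxw⟩ | ⟨x, hx, hxw⟩)
        · exact absurd hxw (by simp)
        · cases Sum.inr.inj hxw; exact hx
  have hisocard : {v : α ⊕ β | (G ⊕g H).neighborSet v = ∅}.ncard = k + h := by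
    rw [hisoset, Set.ncard_union_eq (by
        rw [Set.disjoint_iff_forall_ne]
        rintro x ⟨a, _, rfl⟩ y ⟨b, _, rfl⟩
        simp) (Set.toFinite _) (Set.toFinite _),
      Set.ncard_image_of_injective _ Sum.inl_injective,
      Set.ncard_image_of_injective _ Sum.inr_injective, hGiso, hHiso]
  apply le_antisymm
  · exact Nat.sInf_le hmem
  · refine le_csInf ⟨_, hmem⟩ ?_
    rintro n ⟨f, hf⟩
    have := nl_lower (G ⊕g H) f hf
    rw [hisocard] at this
    exact this
end

section
/- Let G be a connected split graph with vertex partition V(G) = U ∪ W, where U induces a complete graph and W is a maximal independent set (so every vertex of U has a neighbor in W). For X ⊆ U let 𝒫(X) = {w ∈ W : N(w) = X}, and let ρ(G) = max{|X| + |𝒫(X)| : X ⊆ U}. If 𝒫(X) = ∅ for every X ⊆ U with |X| = |U| − 1, then χ_NL(G) = ρ(G); otherwise (if 𝒫(X) ≠ ∅ for some X ⊆ U with |X| = |U| − 1), χ_NL(G) = max{|U| + 1, ρ(G)}. -/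
/-!
For `X ⊆ U`, the vertices of `X ∪ 𝒫(X)` are pairwise adjacent or have equal neighbourhoods, so
every NL-coloring is injective on them; hence `ρ(G)` colours are needed. If `N(w) = U \ {u}` for
some `w ∈ W` and only `|U|` colours are used, then `U` sees every colour, `w` is forced to take
the colour of `u`, and `u`, `w` both see exactly the other colours: one more colour is needed.

Conversely, with `k` colours satisfying these bounds, colour `U` injectively and each class
`𝒫(Y)` injectively with colours not used on `Y`, which is possible as `|Y| + |𝒫(Y)| ≤ k`. When
`k > |U|` a colour unused on `U` is put into every class. A vertex `u ∈ U` and a vertex `w ∈ W` of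
the same colour are then separated by a vertex of `U \ {u}` outside `N(w)` or, when
`N(w) = U \ {u}`, by a neighbour of `u` in `W` carrying that colour.
-/

open SimpleGraph

section

open Set

namespace Set

variable {α β : Type*} {s : Set α} {t u : Set β}

theorem Finite.exists_injOn_mapsTo_of_ncard_le [Nonempty β] (hs : s.Finite) (ht : t.Finite)
    (hst : s.ncard ≤ t.ncard) : ∃ f : α → β, s.InjOn f ∧ s.MapsTo f t := by
  obtain ⟨f, hmaps, hinj⟩ := hs.exists_injOn_of_encard_le (t := t)
    (by rwa [← hs.cast_ncard_eq, ← ht.cast_ncard_eq, Nat.cast_le])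
  exact ⟨f, hinj, hmaps⟩

theorem Finite.exists_injOn_mapsTo_apply_eq (hs : s.Finite) (ht : t.Finite)
    (hst : s.ncard ≤ t.ncard) {a : α} (ha : a ∈ s) {b : β} (hb : b ∈ t) :
    ∃ f : α → β, s.InjOn f ∧ s.MapsTo f t ∧ f a = b := by
  classical
  have : Nonempty β := ⟨b⟩
  obtain ⟨f, hinj, hmaps⟩ := hs.exists_injOn_mapsTo_of_ncard_le ht hst
  refine ⟨Equiv.swap (f a) b ∘ f, (Equiv.injective _).comp_injOn hinj, fun x hx => ?_,
    Equiv.swap_apply_left _ _⟩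
  simp only [Function.comp_apply, Equiv.swap_apply_def]
  split_ifs
  exacts [hb, hmaps ha, hmaps hx]

theorem Finite.exists_injOn_mapsTo_meeting [Nonempty β] (hs : s.Finite) (ht : t.Finite)
    (hst : s.ncard ≤ t.ncard) (hut : u ⊆ t) :
    ∃ f : α → β, s.InjOn f ∧ s.MapsTo f t ∧ (s.Nonempty → u.Nonempty → ∃ a ∈ s, f a ∈ u) := by
  by_cases hsu : s.Nonempty ∧ u.Nonempty
  · obtain ⟨⟨a, ha⟩, b, hb⟩ := hsu
    obtain ⟨f, hinj, hmaps, hfa⟩ := hs.exists_injOn_mapsTo_apply_eq ht hst ha (hut hb)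
    exact ⟨f, hinj, hmaps, fun _ _ => ⟨a, ha, hfa ▸ hb⟩⟩
  · obtain ⟨f, hinj, hmaps⟩ := hs.exists_injOn_mapsTo_of_ncard_le ht hst
    exact ⟨f, hinj, hmaps, fun hs hu => absurd ⟨hs, hu⟩ hsu⟩

theorem InjOn.ncard_compl_image [Finite β] {f : α → β} (hf : s.InjOn f) :
    (f '' s)ᶜ.ncard = Nat.card β - s.ncard := by
  rw [ncard_compl, hf.ncard_image]

end Set

variable {V : Type*} {G : SimpleGraph V} {k : ℕ} {c : V → Fin k}

theorem IsNLColoring.injOn (hc : IsNLColoring G c) {S : Set V}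
    (hS : S.Pairwise fun a b => G.Adj a b ∨ G.neighborSet a = G.neighborSet b) : S.InjOn c := by
  intro a ha b hb hab
  by_contra hne
  rcases hS ha hb hne with hadj | hN
  · exact hc.1 a b hadj hab
  · exact hc.2 a b hne hab (by rw [hN])

theorem IsNLColoring.ncard_le (hc : IsNLColoring G c) {S : Set V}
    (hS : S.Pairwise fun a b => G.Adj a b ∨ G.neighborSet a = G.neighborSet b) : S.ncard ≤ k := by
  simpa using ncard_le_ncard_of_injOn c (fun a _ => mem_univ (c a)) (hc.injOn hS)

theorem IsNLColoring.ncard_lt_of_isClique (hc : IsNLColoring G c) {K : Set V}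
    (hK : G.IsClique K) {u w : V} (hu : u ∈ K) (hwu : w ≠ u) (hw : K \ {u} ⊆ G.neighborSet w) :
    K.ncard < k := by
  have hpair : K.Pairwise fun a b => G.Adj a b ∨ G.neighborSet a = G.neighborSet b :=
    hK.mono' fun _ _ => Or.inl
  have hinj := hc.injOn hpair
  refine (hc.ncard_le hpair).lt_of_ne fun hKk => ?_
  have hrainbow : c '' K = univ :=
    eq_of_subset_of_ncard_le (subset_univ _) (by simp [hinj.ncard_image, hKk])
  have hrest : c '' (K \ {u}) = {c u}ᶜ := by
    rw [hinj.image_sdiff_subset (singleton_subset_iff.2 hu), hrainbow, image_singleton,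
      ← compl_eq_univ_sdiff]
  have hsees : ∀ v, K \ {u} ⊆ G.neighborSet v → c v = c u → c '' G.neighborSet v = {c u}ᶜ :=
    fun v hv hvu => subset_antisymm
      (image_subset_iff.2 fun x hx hxu => hc.1 v x hx (hvu.trans hxu.symm))
      (hrest ▸ image_mono hv)
  have hcw : c w = c u := by
    by_contra hne
    obtain ⟨x, hx, hxw⟩ : c w ∈ c '' (K \ {u}) := by rw [hrest]; exact hne
    exact hc.1 w x (hw hx) hxw.symm
  have hNu : K \ {u} ⊆ G.neighborSet u := fun x hx => hK hu hx.1 (Ne.symm hx.2)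
  exact hc.2 w u hwu hcw ((hsees w hw hcw).trans (hsees u hNu rfl).symm)

theorem nlChromaticNumber_eq (hex : ∃ c : V → Fin k, IsNLColoring G c)
    (hle : ∀ k' (c' : V → Fin k'), IsNLColoring G c' → k ≤ k') : nlChromaticNumber G = k :=
  le_antisymm (Nat.sInf_le hex) (le_csInf ⟨k, hex⟩ fun k' ⟨c', hc'⟩ => hle k' c' hc')

namespace SimpleGraph

/-- The class `𝒫(X)`. -/
def neighborSetFiber (G : SimpleGraph V) (W X : Set V) : Set V :=
  {w ∈ W | G.neighborSet w = X}

/-- The parameter `ρ(G)`. -/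
noncomputable def splitRho (G : SimpleGraph V) (U W : Set V) : ℕ :=
  sSup {n : ℕ | ∃ X ⊆ U, n = X.ncard + (G.neighborSetFiber W X).ncard}

theorem le_splitRho [Finite V] {U W X : Set V} (hX : X ⊆ U) :
    X.ncard + (G.neighborSetFiber W X).ncard ≤ G.splitRho U W := by
  refine le_csSup (Finite.bddAbove ?_) ⟨X, hX, rfl⟩
  exact (finite_range fun X : Set V => X.ncard + (G.neighborSetFiber W X).ncard).subset
    (by rintro n ⟨X, -, rfl⟩; exact ⟨X, rfl⟩)

structure IsSplitPartition (G : SimpleGraph V) (U W : Set V) : Prop where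
  union_eq_univ : U ∪ W = univ
  disjoint : Disjoint U W
  isClique : G.IsClique U
  isIndepSet : G.IsIndepSet W

namespace IsSplitPartition

variable {U W : Set V}

theorem mem_or_mem (hs : G.IsSplitPartition U W) (v : V) : v ∈ U ∨ v ∈ W :=
  eq_univ_iff_forall.1 hs.union_eq_univ v

theorem notMem_of_mem_right (hs : G.IsSplitPartition U W) {w : V} (hw : w ∈ W) : w ∉ U :=
  disjoint_right.1 hs.disjoint hw

theorem neighborSet_subset (hs : G.IsSplitPartition U W) {w : V} (hw : w ∈ W) :
    G.neighborSet w ⊆ U := fun x hx =>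
  (hs.mem_or_mem x).resolve_right fun hxW => hs.isIndepSet hw hxW (G.ne_of_adj hx) hx

theorem subset_of_mem_neighborSetFiber (hs : G.IsSplitPartition U W) {X : Set V} {w : V}
    (hw : w ∈ G.neighborSetFiber W X) : X ⊆ U :=
  hw.2 ▸ hs.neighborSet_subset hw.1

theorem ncard_add_ncard_neighborSetFiber_le [Finite V] (hs : G.IsSplitPartition U W)
    (hc : IsNLColoring G c) {X : Set V} (hX : X ⊆ U) :
    X.ncard + (G.neighborSetFiber W X).ncard ≤ k := by
  rw [← ncard_union_eq (hs.disjoint.mono hX fun _ hw => hw.1 :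
    Disjoint X (G.neighborSetFiber W X))]
  refine hc.ncard_le ?_
  rintro a (ha | ⟨-, haX⟩) b (hb | ⟨-, hbX⟩) hab
  · exact Or.inl (hs.isClique (hX ha) (hX hb) hab)
  · exact Or.inl (G.adj_symm (show a ∈ G.neighborSet b from hbX ▸ ha))
  · exact Or.inl (show b ∈ G.neighborSet a from haX ▸ hb)
  · exact Or.inr (haX.trans hbX.symm)

theorem splitRho_le [Finite V] (hs : G.IsSplitPartition U W) (hc : IsNLColoring G c) :
    G.splitRho U W ≤ k :=
  csSup_le ⟨_, ∅, empty_subset U, rfl⟩ <| by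
    rintro n ⟨X, hX, rfl⟩
    exact hs.ncard_add_ncard_neighborSetFiber_le hc hX

theorem ncard_lt_of_neighborSetFiber_nonempty [Finite V] (hs : G.IsSplitPartition U W)
    (hc : IsNLColoring G c) {X : Set V} (hX : X ⊆ U) (hXcard : X.ncard = U.ncard - 1)
    (hne : (G.neighborSetFiber W X).Nonempty) : U.ncard < k := by
  obtain ⟨w, hwW, hwX⟩ := hne
  rcases U.eq_empty_or_nonempty with rfl | hU
  · simpa using (c w).pos
  have hpos := (ncard_pos (toFinite U)).2 hU
  obtain ⟨u, hu⟩ : ∃ u, U \ X = {u} := ncard_eq_one.1 (by rw [ncard_sdiff hX]; omega)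
  have huU : u ∈ U := (hu ▸ mem_singleton u : u ∈ U \ X).1
  refine hc.ncard_lt_of_isClique (w := w) hs.isClique huU ?_ ?_
  · rintro rfl
    exact hs.notMem_of_mem_right hwW huU
  · rw [← hu, sdiff_sdiff_cancel_left hX, hwX]

theorem image_neighborSet_ne (hs : G.IsSplitPartition U W) (hinj : U.InjOn c)
    (hout : ∀ w ∈ W, c w ∉ c '' G.neighborSet w)
    (hescape : ∀ u ∈ U, ∀ w ∈ W, G.neighborSet w = U \ {u} →
      ∃ w' ∈ W, G.Adj u w' ∧ c w' ∉ c '' U)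
    {u w : V} (hu : u ∈ U) (hw : w ∈ W) (hcol : c u = c w) :
    c '' G.neighborSet u ≠ c '' G.neighborSet w := by
  suffices ∃ x ∈ G.neighborSet u, c x ∉ c '' G.neighborSet w by
    obtain ⟨x, hx, hxw⟩ := this
    exact fun h => hxw (h ▸ mem_image_of_mem c hx)
  have hNU := hs.neighborSet_subset hw
  by_cases hN : G.neighborSet w = U \ {u}
  · obtain ⟨w', hw', hadj, hw'U⟩ := hescape u hu w hw hN
    exact ⟨w', hadj, fun h => hw'U (image_mono hNU h)⟩
  have hunot : u ∉ G.neighborSet w := fun h => hout w hw ⟨u, h, hcol⟩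
  obtain ⟨x, ⟨hxU, hxu⟩, hxw⟩ :=
    exists_of_ssubset (ssubset_of_subset_of_ne (subset_sdiff_singleton hNU hunot) hN)
  refine ⟨x, hs.isClique hu hxU (Ne.symm hxu), ?_⟩
  rintro ⟨y, hy, hyx⟩
  exact hxw (hinj (hNU hy) hxU hyx ▸ hy)

theorem isNLColoring_of (hs : G.IsSplitPartition U W) (hinj : U.InjOn c)
    (hout : ∀ w ∈ W, c w ∉ c '' G.neighborSet w)
    (hfiber : ∀ Y, (G.neighborSetFiber W Y).InjOn c)
    (hescape : ∀ u ∈ U, ∀ w ∈ W, G.neighborSet w = U \ {u} →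
      ∃ w' ∈ W, G.Adj u w' ∧ c w' ∉ c '' U) :
    IsNLColoring G c := by
  have hadjW : ∀ a b, G.Adj a b → b ∈ W → c a ≠ c b :=
    fun a b hab hb h => hout b hb ⟨a, hab.symm, h⟩
  refine ⟨fun a b hab => ?_, fun a b hab hcol => ?_⟩
  · rcases hs.mem_or_mem b with hb | hb
    · rcases hs.mem_or_mem a with ha | ha
      · exact fun h => G.ne_of_adj hab (hinj ha hb h)
      · exact fun h => hadjW b a hab.symm ha h.symm
    · exact hadjW a b hab hb
  rcases hs.mem_or_mem a with ha | ha <;> rcases hs.mem_or_mem b with hb | hb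
  · exact absurd (hinj ha hb hcol) hab
  · exact hs.image_neighborSet_ne hinj hout hescape ha hb hcol
  · exact (hs.image_neighborSet_ne hinj hout hescape hb ha hcol.symm).symm
  by_cases hN : G.neighborSet a = G.neighborSet b
  · exact absurd (hfiber _ ⟨ha, rfl⟩ ⟨hb, hN.symm⟩ hcol) hab
  · rwa [Ne, hinj.image_eq_image_iff (hs.neighborSet_subset ha) (hs.neighborSet_subset hb)]

theorem nonempty_right [Nonempty V] (hs : G.IsSplitPartition U W)
    (hmax : ∀ u ∈ U, ∃ w ∈ W, G.Adj u w) : W.Nonempty := by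
  obtain ⟨v⟩ := ‹Nonempty V›
  rcases hs.mem_or_mem v with hv | hv
  exacts [(hmax v hv).imp fun w hw => hw.1, ⟨v, hv⟩]

theorem exists_injOn_neighborSetFiber [Finite V] (hs : G.IsSplitPartition U W) {e : V → Fin k}
    (he : U.InjOn e) (hk : ∀ X ⊆ U, X.ncard + (G.neighborSetFiber W X).ncard ≤ k) (Y : Set V) :
    ∃ g : V → Fin k, (G.neighborSetFiber W Y).InjOn g ∧
      (G.neighborSetFiber W Y).MapsTo g (e '' Y)ᶜ ∧ ((G.neighborSetFiber W Y).Nonempty →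
        (e '' U)ᶜ.Nonempty → ∃ w ∈ G.neighborSetFiber W Y, g w ∈ (e '' U)ᶜ) := by
  rcases (G.neighborSetFiber W Y).eq_empty_or_nonempty with hY | ⟨w, hw⟩
  · exact ⟨e, by simp [hY, mapsTo_empty]⟩
  have : Nonempty (Fin k) := ⟨e w⟩
  have hYU := hs.subset_of_mem_neighborSetFiber hw
  refine (toFinite _).exists_injOn_mapsTo_meeting (toFinite _) ?_
    (compl_subset_compl.2 (image_mono hYU))
  rw [(he.mono hYU).ncard_compl_image, Nat.card_fin]
  have := hk Y hYU
  omega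

theorem exists_isNLColoring [Finite V] (hs : G.IsSplitPartition U W)
    (hmax : ∀ u ∈ U, ∃ w ∈ W, G.Adj u w)
    (hk : ∀ X ⊆ U, X.ncard + (G.neighborSetFiber W X).ncard ≤ k)
    (hcase : (∀ X ⊆ U, X.ncard = U.ncard - 1 → G.neighborSetFiber W X = ∅) ∨ U.ncard < k) :
    ∃ c : V → Fin k, IsNLColoring G c := by
  classical
  cases isEmpty_or_nonempty V
  · exact ⟨isEmptyElim, fun u => isEmptyElim u, fun u => isEmptyElim u⟩
  obtain ⟨w₀, hw₀⟩ := hs.nonempty_right hmax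
  have : Nonempty (Fin k) := Fin.pos_iff_nonempty.1 <|
    ((ncard_pos (toFinite _)).2 (⟨w₀, hw₀, rfl⟩ : (G.neighborSetFiber W _).Nonempty)).trans_le
      ((Nat.le_add_left _ _).trans (hk _ (hs.neighborSet_subset hw₀)))
  obtain ⟨e, he, -⟩ := (toFinite U).exists_injOn_mapsTo_of_ncard_le
    (toFinite (univ : Set (Fin k))) (by simpa using (Nat.le_add_right _ _).trans (hk U le_rfl))
  choose g hginj hgmaps hgmeet using hs.exists_injOn_neighborSetFiber he hk
  set c : V → Fin k := fun v => if v ∈ U then e v else g (G.neighborSet v) v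
  have hcU : ∀ v ∈ U, c v = e v := fun v hv => if_pos hv
  have hcW : ∀ v ∈ W, c v = g (G.neighborSet v) v :=
    fun v hv => if_neg (hs.notMem_of_mem_right hv)
  have himage : ∀ X ⊆ U, c '' X = e '' X := fun X hX => image_congr fun v hv => hcU v (hX hv)
  refine ⟨c, hs.isNLColoring_of (he.congr fun v hv => (hcU v hv).symm) ?_ ?_ ?_⟩
  · intro w hw
    rw [hcW w hw, himage _ (hs.neighborSet_subset hw)]
    exact hgmaps _ ⟨hw, rfl⟩
  · exact fun Y => (hginj Y).congr fun w hw => by rw [hcW w hw.1, hw.2]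
  · intro u hu w hw hN
    have hlt : U.ncard < k := hcase.resolve_left fun h => notMem_empty w <|
      h _ (hs.neighborSet_subset hw) (by rw [hN, ncard_sdiff_singleton_of_mem hu]) ▸ ⟨hw, rfl⟩
    have hfree : (e '' U)ᶜ.Nonempty := (ncard_pos (toFinite _)).1 <| by
      rw [he.ncard_compl_image, Nat.card_fin]
      omega
    obtain ⟨w', hw', hadj⟩ := hmax u hu
    obtain ⟨w'', ⟨hw''W, hw''N⟩, hcol⟩ := hgmeet _ ⟨w', hw', rfl⟩ hfree
    refine ⟨w'', hw''W, G.adj_symm (show u ∈ G.neighborSet w'' from hw''N ▸ hadj.symm), ?_⟩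
    rwa [hcW _ hw''W, hw''N, himage U subset_rfl]

end IsSplitPartition

end SimpleGraph

end

theorem nlChromaticNumber_split_graph_general
    {V : Type*} [Fintype V] (G : SimpleGraph V)
    (U W : Set V) (hUW : U ∪ W = Set.univ) (hdisj : Disjoint U W)
    (hclique : ∀ u ∈ U, ∀ v ∈ U, u ≠ v → G.Adj u v)
    (hindep : ∀ u ∈ W, ∀ v ∈ W, ¬ G.Adj u v)
    (hmax : ∀ u ∈ U, ∃ w ∈ W, G.Adj u w) :
    ((∀ X ⊆ U, X.ncard = U.ncard - 1 → {w ∈ W | G.neighborSet w = X} = ∅) →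
      nlChromaticNumber G =
        sSup {n : ℕ | ∃ X ⊆ U, n = X.ncard + {w ∈ W | G.neighborSet w = X}.ncard}) ∧
    ((∃ X ⊆ U, X.ncard = U.ncard - 1 ∧ {w ∈ W | G.neighborSet w = X} ≠ ∅) →
      nlChromaticNumber G =
        max (U.ncard + 1)
          (sSup {n : ℕ | ∃ X ⊆ U, n = X.ncard + {w ∈ W | G.neighborSet w = X}.ncard})) := by
  have hs : G.IsSplitPartition U W :=
    ⟨hUW, hdisj, fun u hu v hv => hclique u hu v hv, fun u hu v hv _ => hindep u hu v hv⟩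
  refine ⟨fun h => ?_, fun ⟨X, hXU, hXcard, hne⟩ => ?_⟩
  · exact nlChromaticNumber_eq (hs.exists_isNLColoring hmax (fun X => le_splitRho) (.inl h))
      fun k c hc => hs.splitRho_le hc
  · refine nlChromaticNumber_eq (hs.exists_isNLColoring hmax (fun Y hY => ?_) (.inr ?_))
      fun k c hc => max_le ?_ (hs.splitRho_le hc)
    · exact (le_splitRho hY).trans (le_max_right _ _)
    · exact Nat.lt_of_succ_le (le_max_left _ _)
    · exact hs.ncard_lt_of_neighborSetFiber_nonempty hc hXU hXcard
        (Set.nonempty_iff_ne_empty.2 hne)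

/-- NL-chromatic number of a connected split graph with clique `U` and maximal
independent set `W`, in terms of `ρ(G) = max {|X| + |𝒫(X)| : X ⊆ U}`, where
`𝒫(X) = {w ∈ W : N(w) = X}`. -/
theorem nlChromaticNumber_split_graph
    {V : Type*} [Fintype V] (G : SimpleGraph V) (hconn : G.Connected)
    (U W : Set V) (hUW : U ∪ W = Set.univ) (hdisj : Disjoint U W)
    (hclique : ∀ u ∈ U, ∀ v ∈ U, u ≠ v → G.Adj u v)
    (hindep : ∀ u ∈ W, ∀ v ∈ W, ¬ G.Adj u v)
    (hmax : ∀ u ∈ U, ∃ w ∈ W, G.Adj u w) :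
    ((∀ X ⊆ U, X.ncard = U.ncard - 1 → {w ∈ W | G.neighborSet w = X} = ∅) →
      nlChromaticNumber G =
        sSup {n : ℕ | ∃ X ⊆ U, n = X.ncard + {w ∈ W | G.neighborSet w = X}.ncard}) ∧
    ((∃ X ⊆ U, X.ncard = U.ncard - 1 ∧ {w ∈ W | G.neighborSet w = X} ≠ ∅) →
      nlChromaticNumber G =
        max (U.ncard + 1)
          (sSup {n : ℕ | ∃ X ⊆ U, n = X.ncard + {w ∈ W | G.neighborSet w = X}.ncard})) :=
  nlChromaticNumber_split_graph_general G U W hUW hdisj hclique hindep hmax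
end
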